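/- arXiv:math/0608619 — 4 statements merged into one kernel-verified Lean document; each statement's English description precedes it below -/
import Mathlib

section
/- Let α > 0 and let g vary smoothly with index α (g ∈ SR_α). Then g is strictly increasing on some neighbourhood of ∞, and its derivative g′ varies smoothly with index α − 1 (g′ ∈ SR_{α−1}). -/
open Filter Real Set Topology Finset

section AuxSV

variable {f g : ℝ → ℝ}

private lemma contDiffAt_deriv_top {f : ℝ → ℝ} {x : ℝ} (h : ContDiffAt ℝ (⊤ : ℕ∞) f x) :
    ContDiffAt ℝ (⊤ : ℕ∞) (deriv f) x := by
  rw [contDiffAt_infty] at h ⊢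
  intro n
  obtain ⟨s, hs, hfs⟩ := (h (n + 1)).contDiffOn le_rfl (by simp)
  have hfi : ContDiffOn ℝ ((n + 1 : ℕ) : WithTop ℕ∞) f (interior s) := hfs.mono interior_subset
  have := hfi.deriv_of_isOpen isOpen_interior (m := (n : WithTop ℕ∞)) (by exact_mod_cast le_rfl)
  exact this.contDiffAt (isOpen_interior.mem_nhds (mem_interior_iff_mem_nhds.2 hs))

private lemma contDiffAt_iteratedDeriv_top {f : ℝ → ℝ} {x : ℝ} (h : ContDiffAt ℝ (⊤ : ℕ∞) f x)
    (n : ℕ) : ContDiffAt ℝ (⊤ : ℕ∞) (iteratedDeriv n f) x := by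
  induction n generalizing f with
  | zero => simpa [iteratedDeriv_zero] using h
  | succ n IH =>
    rw [iteratedDeriv_succ']
    exact IH (contDiffAt_deriv_top h)

private lemma evEq_nhds (h : f =ᶠ[atTop] g) :
    ∀ᶠ x in atTop, f =ᶠ[𝓝 x] g := by
  obtain ⟨a, ha⟩ := eventually_atTop.1 h
  filter_upwards [eventually_gt_atTop a] with x hx
  filter_upwards [Ioi_mem_nhds hx] with y hy using ha y (le_of_lt hy)

private lemma evEq_deriv (h : f =ᶠ[atTop] g) :
    deriv f =ᶠ[atTop] deriv g := by
  filter_upwards [evEq_nhds h] with x hx using hx.deriv_eq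

private lemma evEq_iteratedDeriv (h : f =ᶠ[atTop] g) (n : ℕ) :
    iteratedDeriv n f =ᶠ[atTop] iteratedDeriv n g := by
  filter_upwards [evEq_nhds h] with x hx using hx.iteratedDeriv_eq n

private lemma iteratedDerivWithin_of_isOpen' {s : Set ℝ} (hs : IsOpen s) {f : ℝ → ℝ}
    {x : ℝ} (hx : x ∈ s) (n : ℕ) : iteratedDerivWithin n f s x = iteratedDeriv n f x := by
  simp only [iteratedDerivWithin, iteratedDeriv, iteratedFDerivWithin_of_isOpen n hs hx]

private lemma iteratedDeriv_mul_eqOn {s : Set ℝ} (hs : IsOpen s) {f g : ℝ → ℝ}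
    (hf : ContDiffOn ℝ (⊤ : ℕ∞) f s) (hg : ContDiffOn ℝ (⊤ : ℕ∞) g s) :
    ∀ (n : ℕ), ∀ x ∈ s, iteratedDeriv n (fun y => f y * g y) x
      = ∑ k ∈ Finset.range (n + 1), (n.choose k : ℝ) *
          (iteratedDeriv k f x * iteratedDeriv (n - k) g x) := by
  have hfat : ∀ y ∈ s, ContDiffAt ℝ (⊤ : ℕ∞) f y := fun y hy => (hf y hy).contDiffAt (hs.mem_nhds hy)
  have hgat : ∀ y ∈ s, ContDiffAt ℝ (⊤ : ℕ∞) g y := fun y hy => (hg y hy).contDiffAt (hs.mem_nhds hy)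
  have hfd : ∀ (k : ℕ), ∀ y ∈ s, DifferentiableAt ℝ (iteratedDeriv k f) y := fun k y hy =>
    (contDiffAt_iteratedDeriv_top (hfat y hy) k).differentiableAt (by simp)
  have hgd : ∀ (k : ℕ), ∀ y ∈ s, DifferentiableAt ℝ (iteratedDeriv k g) y := fun k y hy =>
    (contDiffAt_iteratedDeriv_top (hgat y hy) k).differentiableAt (by simp)
  intro n
  induction n with
  | zero => intro x hx; simp
  | succ n IH =>
    intro x hx
    have hsum : iteratedDeriv n (fun y => f y * g y) =ᶠ[𝓝 x]
        fun y => ∑ k ∈ Finset.range (n + 1), (n.choose k : ℝ) *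
          (iteratedDeriv k f y * iteratedDeriv (n - k) g y) := by
      filter_upwards [hs.mem_nhds hx] with y hy using IH y hy
    rw [iteratedDeriv_succ, hsum.deriv_eq]
    have hterm : ∀ k ∈ Finset.range (n + 1), DifferentiableAt ℝ
        (fun y => (n.choose k : ℝ) * (iteratedDeriv k f y * iteratedDeriv (n - k) g y)) x :=
      fun k _ => (((hfd k x hx).mul (hgd (n - k) x hx)).const_mul _)
    rw [deriv_fun_sum hterm]
    have hder : ∀ k ∈ Finset.range (n + 1),
        deriv (fun y => (n.choose k : ℝ) * (iteratedDeriv k f y * iteratedDeriv (n - k) g y)) x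
        = (n.choose k : ℝ) * (iteratedDeriv (k + 1) f x * iteratedDeriv (n - k) g x
            + iteratedDeriv k f x * iteratedDeriv (n - k + 1) g x) := by
      intro k _
      rw [deriv_const_mul _ ((hfd k x hx).fun_mul (hgd (n - k) x hx)),
        deriv_fun_mul (hfd k x hx) (hgd (n - k) x hx), ← iteratedDeriv_succ, ← iteratedDeriv_succ]
    rw [Finset.sum_congr rfl hder]
    rw [Finset.sum_choose_succ_mul (fun i j => iteratedDeriv i f x * iteratedDeriv j g x) n]
    rw [Finset.sum_congr rfl (fun k hk => mul_add ((n.choose k : ℝ)) _ _), Finset.sum_add_distrib,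
      add_comm]
    congr 1
    refine Finset.sum_congr rfl fun k hk => ?_
    have hk' : k ≤ n := Nat.lt_succ_iff.1 (Finset.mem_range.1 hk)
    rw [show n - k + 1 = n + 1 - k by omega]

private lemma tendsto_iteratedDeriv_logDeriv (u : ℝ → ℝ) (α : ℝ) (hα : α ≠ 0)
    {A : ℝ} (hsm : ContDiffOn ℝ (⊤ : ℕ∞) u (Set.Ioi A))
    (hu : Tendsto u atTop (𝓝 α))
    (hd : ∀ n : ℕ, 1 ≤ n → Tendsto (iteratedDeriv n u) atTop (𝓝 0)) :
    ∀ n : ℕ, Tendsto (iteratedDeriv n (fun x => deriv u x / u x)) atTop (𝓝 0) := by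
  set v : ℝ → ℝ := fun x => deriv u x / u x with hv
  have hne : ∀ᶠ x in atTop, u x ≠ 0 := hu.eventually_ne hα
  obtain ⟨a, ha⟩ := eventually_atTop.1 hne
  set B := max A a with hB
  set s : Set ℝ := Set.Ioi B with hs
  have hso : IsOpen s := isOpen_Ioi
  have hmem : ∀ x ∈ s, u x ≠ 0 := fun x hx => ha x (le_of_lt (lt_of_le_of_lt (le_max_right A a) hx))
  have hsu : ContDiffOn ℝ (⊤ : ℕ∞) u s := hsm.mono (Set.Ioi_subset_Ioi (le_max_left A a))
  have hsu' : ContDiffOn ℝ (⊤ : ℕ∞) (deriv u) s := hsu.deriv_of_isOpen hso (m := (⊤ : ℕ∞)) (by simp)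
  have hsv : ContDiffOn ℝ (⊤ : ℕ∞) v s := hsu'.div hsu hmem
  have key : ∀ᶠ x in atTop, deriv u x = u x * v x := by
    filter_upwards [hne] with x hx
    rw [hv]; field_simp
  have main : ∀ n : ℕ, ∀ᶠ x in atTop, iteratedDeriv n v x =
      (iteratedDeriv (n + 1) u x - ∑ k ∈ Finset.Ico 1 (n + 1), (n.choose k : ℝ) *
        (iteratedDeriv k u x * iteratedDeriv (n - k) v x)) / u x := by
    intro n
    filter_upwards [hne, (evEq_iteratedDeriv key n), eventually_gt_atTop B] with x hx hx2 hx3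
    have h1 : iteratedDeriv (n + 1) u x
        = ∑ k ∈ Finset.range (n + 1), (n.choose k : ℝ) *
          (iteratedDeriv k u x * iteratedDeriv (n - k) v x) := by
      rw [iteratedDeriv_succ', hx2]
      exact iteratedDeriv_mul_eqOn hso hsu hsv n x hx3
    rw [h1, Finset.range_eq_Ico, Finset.sum_eq_sum_Ico_succ_bot (Nat.succ_pos n)]
    simp only [Nat.choose_zero_right, Nat.cast_one, one_mul, iteratedDeriv_zero, Nat.sub_zero]
    field_simp
    ring
  intro n
  induction n using Nat.strong_induction_on with
  | _ n IH =>
    refine Tendsto.congr' (Filter.EventuallyEq.symm (main n)) ?_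
    have hsum : Tendsto (fun x => ∑ k ∈ Finset.Ico 1 (n + 1), (n.choose k : ℝ) *
        (iteratedDeriv k u x * iteratedDeriv (n - k) v x)) atTop (𝓝 0) := by
      have : Tendsto (fun x => ∑ k ∈ Finset.Ico 1 (n + 1), (n.choose k : ℝ) *
          (iteratedDeriv k u x * iteratedDeriv (n - k) v x)) atTop
          (𝓝 (∑ k ∈ Finset.Ico 1 (n + 1), (n.choose k : ℝ) * (0 * 0))) := by
        refine tendsto_finset_sum _ fun k hk => ?_
        obtain ⟨hk1, hk2⟩ := Finset.mem_Ico.1 hk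
        exact (((hd k hk1).mul (IH (n - k) (by omega)))).const_mul _
      simpa using this
    have : Tendsto (fun x => (iteratedDeriv (n + 1) u x - ∑ k ∈ Finset.Ico 1 (n + 1),
        (n.choose k : ℝ) * (iteratedDeriv k u x * iteratedDeriv (n - k) v x)) / u x)
        atTop (𝓝 ((0 - 0) / α)) := ((hd (n + 1) (by omega)).sub hsum).div hu hα
    simpa using this

end AuxSV

/-- `g` varies smoothly with index `α` (`g ∈ SR_α`): `g` is eventually positive,
`h x = log (g (exp x))` is `C^∞` on a neighbourhood of `∞`, `h' → α` and
`h⁽ⁿ⁾ → 0` for all `n ≥ 2` as `x → ∞`. -/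
def SmoothlyVarying (α : ℝ) (g : ℝ → ℝ) : Prop :=
  (∀ᶠ x in atTop, 0 < g x) ∧
  (∃ A : ℝ, ContDiffOn ℝ (⊤ : ℕ∞) (fun x => Real.log (g (Real.exp x))) (Set.Ioi A)) ∧
  Tendsto (deriv (fun x => Real.log (g (Real.exp x)))) atTop (nhds α) ∧
  ∀ n : ℕ, 2 ≤ n →
    Tendsto (iteratedDeriv n (fun x => Real.log (g (Real.exp x)))) atTop (nhds 0)

/-- If `α > 0` and `g ∈ SR_α` then `g` is strictly increasing on some
neighbourhood of `∞` and `g' ∈ SR_{α-1}`. -/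
theorem smoothlyVarying_strictMono_and_deriv
    (α : ℝ) (hα : 0 < α) (g : ℝ → ℝ) (hg : SmoothlyVarying α g) :
    (∃ B : ℝ, StrictMonoOn g (Set.Ioi B)) ∧ SmoothlyVarying (α - 1) (deriv g) := by
  obtain ⟨hpos, ⟨A, hA⟩, hu, hhi⟩ := hg
  set h : ℝ → ℝ := fun x => Real.log (g (Real.exp x)) with hh
  set u : ℝ → ℝ := deriv h with hudef
  set v : ℝ → ℝ := fun x => deriv u x / u x with hvdef
  have husm : ContDiffOn ℝ (⊤ : ℕ∞) u (Set.Ioi A) := hA.deriv_of_isOpen isOpen_Ioi (m := (⊤ : ℕ∞)) (by simp)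
  have hd : ∀ n : ℕ, 1 ≤ n → Tendsto (iteratedDeriv n u) atTop (𝓝 0) := by
    intro n hn
    have := hhi (n + 1) (by omega)
    rwa [iteratedDeriv_succ'] at this
  have hv : ∀ n : ℕ, Tendsto (iteratedDeriv n v) atTop (𝓝 0) :=
    tendsto_iteratedDeriv_logDeriv u α (ne_of_gt hα) husm hu hd
  have hv0 : Tendsto v atTop (𝓝 0) := by simpa using hv 0
  have hupos : ∀ᶠ x in atTop, 0 < u x := hu.eventually (eventually_gt_nhds hα)
  have hlogA : ∀ᶠ y in atTop, A < Real.log y :=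
    tendsto_log_atTop.eventually (eventually_gt_atTop A)
  have hg_eq : ∀ᶠ y in atTop, g y = Real.exp (h (Real.log y)) := by
    filter_upwards [hpos, eventually_gt_atTop 0] with y h1 h2
    rw [hh]
    simp only
    rw [Real.exp_log h2, Real.exp_log h1]
  have hDer : ∀ᶠ y in atTop, HasDerivAt g (g y * u (Real.log y) / y) y := by
    filter_upwards [hlogA, eventually_gt_atTop 0, evEq_nhds hg_eq, hg_eq] with y h1 h2 h3 h4
    have hdiffh : DifferentiableAt ℝ h (Real.log y) :=
      (hA.contDiffAt (Ioi_mem_nhds h1)).differentiableAt (by simp)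
    have hherv : HasDerivAt h (u (Real.log y)) (Real.log y) := hdiffh.hasDerivAt
    have hlog : HasDerivAt Real.log y⁻¹ y := Real.hasDerivAt_log (ne_of_gt h2)
    have hcomp : HasDerivAt (fun t => h (Real.log t)) (u (Real.log y) * y⁻¹) y :=
      hherv.comp y hlog
    have hexp : HasDerivAt (fun t => Real.exp (h (Real.log t)))
        (Real.exp (h (Real.log y)) * (u (Real.log y) * y⁻¹)) y :=
      (Real.hasDerivAt_exp _).comp y hcomp
    have hgy : HasDerivAt g (Real.exp (h (Real.log y)) * (u (Real.log y) * y⁻¹)) y :=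
      hexp.congr_of_eventuallyEq h3
    have heq : g y * u (Real.log y) / y = Real.exp (h (Real.log y)) * (u (Real.log y) * y⁻¹) := by
      rw [h4]; ring
    rwa [heq]
  have hderiv_eq : ∀ᶠ y in atTop, deriv g y = g y * u (Real.log y) / y := by
    filter_upwards [hDer] with y hy using hy.deriv
  have hdgpos : ∀ᶠ y in atTop, 0 < deriv g y := by
    filter_upwards [hderiv_eq, hpos, eventually_gt_atTop 0,
      tendsto_log_atTop.eventually hupos] with y e1 e2 e3 e4
    rw [e1]; positivity
  constructor
  · -- strict monotonicity
    obtain ⟨B, hB⟩ := eventually_atTop.1 (hDer.and hdgpos)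
    refine ⟨B, strictMonoOn_of_deriv_pos (convex_Ioi B) ?_ ?_⟩
    · intro y hy
      exact ((hB y (le_of_lt hy)).1.differentiableAt.continuousAt).continuousWithinAt
    · intro y hy
      rw [interior_Ioi] at hy
      exact (hB y (le_of_lt hy)).2
  · -- SmoothlyVarying (α - 1) (deriv g)
    set h₁ : ℝ → ℝ := fun x => Real.log (deriv g (Real.exp x)) with hh₁
    set H : ℝ → ℝ := fun x => h x + Real.log (u x) - x with hH
    have hE : h₁ =ᶠ[atTop] H := by
      filter_upwards [tendsto_exp_atTop.eventually hderiv_eq,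
        tendsto_exp_atTop.eventually hg_eq, hupos] with x e1 e2 e3
      rw [Real.log_exp] at e1 e2
      show Real.log (deriv g (Real.exp x)) = h x + Real.log (u x) - x
      rw [e1, e2, Real.log_div (by positivity) (Real.exp_ne_zero x),
        Real.log_mul (Real.exp_ne_zero _) (ne_of_gt e3), Real.log_exp, Real.log_exp]
    obtain ⟨c₁, hc₁⟩ := eventually_atTop.1 (hE.and hupos)
    set C := max A c₁ with hC
    have hCA : Set.Ioi C ⊆ Set.Ioi A := Set.Ioi_subset_Ioi (le_max_left A c₁)
    have huC : ∀ x ∈ Set.Ioi C, 0 < u x :=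
      fun x hx => (hc₁ x (le_of_lt (lt_of_le_of_lt (le_max_right A c₁) hx))).2
    have hEC : ∀ x ∈ Set.Ioi C, h₁ x = H x :=
      fun x hx => (hc₁ x (le_of_lt (lt_of_le_of_lt (le_max_right A c₁) hx))).1
    have hsu2 : ContDiffOn ℝ (⊤ : ℕ∞) u (Set.Ioi C) := husm.mono hCA
    have hsv2 : ContDiffOn ℝ (⊤ : ℕ∞) v (Set.Ioi C) :=
      (hsu2.deriv_of_isOpen isOpen_Ioi (m := (⊤ : ℕ∞)) (by simp)).div hsu2
        (fun x hx => ne_of_gt (huC x hx))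
    have hsmH : ContDiffOn ℝ (⊤ : ℕ∞) H (Set.Ioi C) := by
      refine ContDiffOn.sub (ContDiffOn.add (hA.mono hCA) ?_) contDiffOn_id
      exact hsu2.log (fun x hx => ne_of_gt (huC x hx))
    have hderivH : deriv H =ᶠ[atTop] fun x => u x + v x - 1 := by
      filter_upwards [eventually_gt_atTop A, hupos] with x h1 h2
      have hcd_at : ContDiffAt ℝ (⊤ : ℕ∞) h x := hA.contDiffAt (Ioi_mem_nhds h1)
      have hder_h : HasDerivAt h (u x) x := (hcd_at.differentiableAt (by simp)).hasDerivAt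
      have hu_diff : DifferentiableAt ℝ u x :=
        (contDiffAt_deriv_top hcd_at).differentiableAt (by simp)
      have hlogu : HasDerivAt (fun t => Real.log (u t)) (deriv u x / u x) x :=
        (hu_diff.hasDerivAt).log (ne_of_gt h2)
      have hHder : HasDerivAt H (u x + deriv u x / u x - 1) x :=
        (hder_h.add hlogu).sub (hasDerivAt_id x)
      exact hHder.deriv
    refine ⟨hdgpos, ⟨C, hsmH.congr hEC⟩, ?_, ?_⟩
    · -- derivative tends to α - 1
      have := ((hu.add hv0).sub_const 1).congr' (hderivH.symm)
      have h2 : Tendsto (deriv H) atTop (𝓝 (α - 1)) := by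
        simpa using this
      exact h2.congr' ((evEq_deriv hE).symm)
    · -- higher derivatives tend to 0
      intro n hn
      obtain ⟨m, rfl⟩ : ∃ m, n = m + 1 := ⟨n - 1, by omega⟩
      have hm1 : 1 ≤ m := by omega
      have e1 : iteratedDeriv (m + 1) h₁ =ᶠ[atTop] iteratedDeriv m (deriv H) := by
        have := evEq_iteratedDeriv hE (m + 1)
        rwa [iteratedDeriv_succ' (f := H)] at this
      have e2 : iteratedDeriv m (deriv H) =ᶠ[atTop]
          iteratedDeriv m (fun x => u x + v x - 1) := evEq_iteratedDeriv hderivH m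
      have hfun : (fun x => u x + v x - 1) = fun x => (-1 : ℝ) + (u x + v x) := by
        funext x; ring
      have e3 : iteratedDeriv m (fun x => u x + v x - 1) =ᶠ[atTop]
          fun x => iteratedDeriv m u x + iteratedDeriv m v x := by
        filter_upwards [eventually_gt_atTop C] with x hx
        have hxs : x ∈ Set.Ioi C := hx
        have hud : UniqueDiffOn ℝ (Set.Ioi C) := isOpen_Ioi.uniqueDiffOn
        rw [hfun, ← iteratedDerivWithin_of_isOpen' isOpen_Ioi hxs m,
          iteratedDerivWithin_const_add (by omega) (-1 : ℝ)]
        have hadd := iteratedDerivWithin_add (n := m) hxs hud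
          ((hsu2.of_le (by exact_mod_cast le_top)) x hxs) ((hsv2.of_le (by exact_mod_cast le_top)) x hxs)
        rw [show (fun x => u x + v x) = u + v from rfl, hadd,
          iteratedDerivWithin_of_isOpen' isOpen_Ioi hxs m,
          iteratedDerivWithin_of_isOpen' isOpen_Ioi hxs m]
      have hlim : Tendsto (fun x => iteratedDeriv m u x + iteratedDeriv m v x) atTop (𝓝 0) := by
        have := (hd m hm1).add (hv m)
        simpa using this
      exact ((hlim.congr' e3.symm).congr' e2.symm).congr' e1.symm
end

section
/- Let U be a non-decreasing right-continuous function on ℝ with U(x) = 0 for all x < 0, and suppose U is regularly varying of index ρ > 0 at ∞. Then for every r > 0, −log ∫_{(x,∞)} e^{−ry} dU(y) ~ r x as x → ∞. -/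
open Filter MeasureTheory Real Set

/-- `l` is slowly varying at `∞` (`l ∈ R₀`). -/
def SlowlyVarying (l : ℝ → ℝ) : Prop :=
  (∀ᶠ x in atTop, 0 < l x) ∧
  ∀ c : ℝ, 0 < c → Tendsto (fun x => l (c * x) / l x) atTop (nhds 1)

/-- `f` is regularly varying of index `α` at `∞` (`f ∈ R_α`): `f x = x^α l(x)` for a
slowly varying `l`. -/
def RegularlyVarying (α : ℝ) (f : ℝ → ℝ) : Prop :=
  ∃ l : ℝ → ℝ, SlowlyVarying l ∧ ∀ᶠ x in atTop, f x = x ^ α * l x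

/-!
For every small `s > 0` the integral `I(x) = ∫_{(x,∞)} e^{-ry} dU(y)` is squeezed, for large `x`,
between `e^{-(r+s)x}` times the mass `U(cx) - U(x)` with `c = 1 + s/r`, which stays bounded below
because `U(cx)/U(x) → c^ρ > 1`, and `e^{-(r-s)x}` times the tail `∫_{(a,∞)} e^{-sy} dU(y)`. The
tail is finite because `U(x+1)/U(x) → 1`, so that `∑ₖ e^{-sk} U(a+k+1)` passes the ratio test.
Taking logarithms gives `-log I(x) = rx + o(x)`.
-/

open Topology

namespace RegularlyVarying

variable {ρ : ℝ} {f : ℝ → ℝ}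

theorem eventually_pos (hf : RegularlyVarying ρ f) : ∀ᶠ x in atTop, 0 < f x := by
  obtain ⟨l, ⟨hl, -⟩, hfl⟩ := hf
  filter_upwards [hl, hfl, eventually_gt_atTop 0] with x hlx hfx hx
  rw [hfx]
  positivity

theorem tendsto_apply_mul_div (hf : RegularlyVarying ρ f) {c : ℝ} (hc : 0 < c) :
    Tendsto (fun x => f (c * x) / f x) atTop (𝓝 (c ^ ρ)) := by
  obtain ⟨l, ⟨hl, hslow⟩, hfl⟩ := hf
  have hcx : Tendsto (fun x => c * x) atTop atTop := tendsto_id.const_mul_atTop hc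
  have hlim := (hslow c hc).const_mul (c ^ ρ)
  rw [mul_one] at hlim
  refine hlim.congr' ?_
  filter_upwards [hl, hfl, hcx.eventually hfl, eventually_gt_atTop 0] with x hlx hfx hfcx hx
  rw [hfx, hfcx, mul_rpow hc.le hx.le]
  have : 0 < x ^ ρ := rpow_pos_of_pos hx ρ
  field_simp

theorem tendsto_apply_add_div (hf : RegularlyVarying ρ f) (hmono : Monotone f) {h : ℝ}
    (hh : 0 ≤ h) : Tendsto (fun x => f (x + h) / f x) atTop (𝓝 1) := by
  refine tendsto_order.2 ⟨fun a ha => ?_, fun b hb => ?_⟩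
  · filter_upwards [hf.eventually_pos] with x hx
    rw [lt_div_iff₀ hx]
    nlinarith [hmono (le_add_of_nonneg_right hh : x ≤ x + h)]
  · have hpow : Tendsto (fun c : ℝ => c ^ ρ) (𝓝[>] 1) (𝓝 1) := by
      simpa using ((continuousAt_rpow_const 1 ρ (Or.inl one_ne_zero)).tendsto).mono_left
        nhdsWithin_le_nhds
    obtain ⟨c, hcb, hc⟩ := ((hpow.eventually (gt_mem_nhds hb)).and self_mem_nhdsWithin).exists
    have hc1 : 0 < c - 1 := sub_pos.2 hc
    filter_upwards [hf.eventually_pos, (hf.tendsto_apply_mul_div (zero_lt_one.trans hc)).eventually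
      (gt_mem_nhds hcb), eventually_ge_atTop (h / (c - 1))] with x hx hcx hxh
    have hle : x + h ≤ c * x := by
      rw [div_le_iff₀ hc1] at hxh
      linarith
    exact (div_le_div_of_nonneg_right (hmono hle) hx.le).trans_lt hcx

theorem exists_pos_le_apply_mul_sub (hf : RegularlyVarying ρ f) (hmono : Monotone f)
    (hρ : 0 < ρ) {c : ℝ} (hc : 1 < c) : ∃ d > 0, ∀ᶠ x in atTop, d ≤ f (c * x) - f x := by
  obtain ⟨m, hm1, hmc⟩ := exists_between (one_lt_rpow hc hρ)
  obtain ⟨x₀, hx₀⟩ := hf.eventually_pos.exists_forall_of_atTop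
  refine ⟨(m - 1) * f x₀, mul_pos (sub_pos.2 hm1) (hx₀ x₀ le_rfl), ?_⟩
  filter_upwards [(hf.tendsto_apply_mul_div (zero_lt_one.trans hc)).eventually (lt_mem_nhds hmc),
    eventually_ge_atTop x₀] with x hm hx
  rw [lt_div_iff₀ (hx₀ x hx)] at hm
  nlinarith [mul_le_mul_of_nonneg_left (hmono hx) (sub_pos.2 hm1).le]

end RegularlyVarying

theorem antitone_exp_neg_mul {r : ℝ} (hr : 0 ≤ r) : Antitone fun y => exp (-(r * y)) :=
  fun _ _ hxy => exp_le_exp.2 (by nlinarith)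

theorem Ioi_subset_iUnion_Ioc_add_natCast (a : ℝ) :
    Ioi a ⊆ ⋃ k : ℕ, Ioc (a + k) (a + k + 1) := by
  intro y hy
  have hya : 0 < y - a := sub_pos.2 hy
  have hceil : 1 ≤ ⌈y - a⌉₊ := Nat.one_le_ceil_iff.2 hya
  refine mem_iUnion.2 ⟨⌈y - a⌉₊ - 1, ?_, ?_⟩ <;>
    push_cast [Nat.cast_sub hceil] <;>
    linarith [Nat.le_ceil (y - a), Nat.ceil_lt_add_one hya.le]

theorem summable_exp_neg_mul_apply_add {f : ℝ → ℝ} {a s : ℝ} (hpos : ∀ y, a ≤ y → 0 < f y)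
    (hratio : Tendsto (fun x => f (x + 1) / f x) atTop (𝓝 1)) (hs : 0 < s) :
    Summable fun k : ℕ => exp (-(s * (a + k))) * f (a + k + 1) := by
  have hf : ∀ k : ℕ, 0 < f (a + k + 1) := fun k => hpos _ (by linarith [k.cast_nonneg (α := ℝ)])
  refine summable_of_ratio_test_tendsto_lt_one (exp_lt_one_iff.2 (neg_neg_of_pos hs))
    (Eventually.of_forall fun k => (mul_pos (exp_pos _) (hf k)).ne') ?_
  have hshift : Tendsto (fun k : ℕ => a + k + 1) atTop atTop :=
    tendsto_atTop_add_const_right _ _ (tendsto_atTop_add_const_left _ _ tendsto_natCast_atTop_atTop)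
  have hlim := (hratio.comp hshift).const_mul (exp (-s))
  rw [mul_one] at hlim
  refine hlim.congr fun k => ?_
  have hexp : exp (-(s * (a + (k + 1 : ℕ)))) = exp (-s) * exp (-(s * (a + k))) := by
    rw [← exp_add]; push_cast; ring_nf
  rw [Real.norm_of_nonneg (mul_pos (exp_pos _) (hf _)).le,
    Real.norm_of_nonneg (mul_pos (exp_pos _) (hf _)).le, hexp]
  simp only [Function.comp_apply]
  push_cast
  rw [show a + (k + 1 : ℝ) + 1 = a + k + 1 + 1 by ring]
  field_simp

namespace StieltjesFunction

variable (U : StieltjesFunction ℝ) {g : ℝ → ℝ}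

theorem setLIntegral_Ioc_le (hg : Antitone g) (a b : ℝ) :
    ∫⁻ y in Ioc a b, ENNReal.ofReal (g y) ∂U.measure ≤
      ENNReal.ofReal (g a) * ENNReal.ofReal (U b - U a) :=
  calc ∫⁻ y in Ioc a b, ENNReal.ofReal (g y) ∂U.measure
      ≤ ∫⁻ _ in Ioc a b, ENNReal.ofReal (g a) ∂U.measure :=
        setLIntegral_mono' measurableSet_Ioc fun y hy => ENNReal.ofReal_le_ofReal (hg hy.1.le)
    _ = _ := by rw [setLIntegral_const, measure_Ioc]

theorem le_setLIntegral_Ioi (hg : Antitone g) (a b : ℝ) :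
    ENNReal.ofReal (g b) * ENNReal.ofReal (U b - U a) ≤
      ∫⁻ y in Ioi a, ENNReal.ofReal (g y) ∂U.measure :=
  calc ENNReal.ofReal (g b) * ENNReal.ofReal (U b - U a)
      = ∫⁻ _ in Ioc a b, ENNReal.ofReal (g b) ∂U.measure := by
        rw [setLIntegral_const, measure_Ioc]
    _ ≤ ∫⁻ y in Ioc a b, ENNReal.ofReal (g y) ∂U.measure :=
        setLIntegral_mono' measurableSet_Ioc fun y hy => ENNReal.ofReal_le_ofReal (hg hy.2)
    _ ≤ _ := lintegral_mono_set Ioc_subset_Ioi_self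

theorem setLIntegral_Ioi_le_tsum (hg : Antitone g) (a : ℝ) :
    ∫⁻ y in Ioi a, ENNReal.ofReal (g y) ∂U.measure ≤
      ∑' k : ℕ, ENNReal.ofReal (g (a + k)) * ENNReal.ofReal (U (a + k + 1) - U (a + k)) :=
  calc ∫⁻ y in Ioi a, ENNReal.ofReal (g y) ∂U.measure
      ≤ ∫⁻ y in ⋃ k : ℕ, Ioc (a + k) (a + k + 1), ENNReal.ofReal (g y) ∂U.measure :=
        lintegral_mono_set (Ioi_subset_iUnion_Ioc_add_natCast a)
    _ ≤ ∑' k : ℕ, ∫⁻ y in Ioc (a + k) (a + k + 1), ENNReal.ofReal (g y) ∂U.measure :=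
        lintegral_iUnion_le _ _
    _ ≤ _ := ENNReal.tsum_le_tsum fun _ => U.setLIntegral_Ioc_le hg _ _

theorem eventually_setLIntegral_exp_lt_top (hpos : ∀ᶠ x in atTop, 0 < U x)
    (hratio : Tendsto (fun x => U (x + 1) / U x) atTop (𝓝 1)) {s : ℝ} (hs : 0 < s) :
    ∀ᶠ a in atTop, ∫⁻ y in Ioi a, ENNReal.ofReal (exp (-(s * y))) ∂U.measure < ⊤ := by
  obtain ⟨a₀, ha₀⟩ := hpos.exists_forall_of_atTop
  filter_upwards [eventually_ge_atTop a₀] with a ha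
  have hU : ∀ k : ℕ, 0 < U (a + k) := fun k => ha₀ _ (by linarith [k.cast_nonneg (α := ℝ)])
  have hsum := summable_exp_neg_mul_apply_add (fun y hy => ha₀ y (ha.trans hy)) hratio hs
  calc ∫⁻ y in Ioi a, ENNReal.ofReal (exp (-(s * y))) ∂U.measure
      ≤ ∑' k : ℕ, ENNReal.ofReal (exp (-(s * (a + k)))) *
          ENNReal.ofReal (U (a + k + 1) - U (a + k)) :=
        U.setLIntegral_Ioi_le_tsum (antitone_exp_neg_mul hs.le) a
    _ ≤ ∑' k : ℕ, ENNReal.ofReal (exp (-(s * (a + k))) * U (a + k + 1)) :=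
        ENNReal.tsum_le_tsum fun k => by
          rw [← ENNReal.ofReal_mul (exp_pos _).le]
          exact ENNReal.ofReal_le_ofReal
            (mul_le_mul_of_nonneg_left (by linarith [hU k]) (exp_pos _).le)
    _ = ENNReal.ofReal (∑' k : ℕ, exp (-(s * (a + k))) * U (a + k + 1)) :=
        (ENNReal.ofReal_tsum_of_nonneg (fun k => (mul_pos (exp_pos _)
          (by simpa [add_assoc] using hU (k + 1))).le) hsum).symm
    _ < ⊤ := ENNReal.ofReal_lt_top

theorem exists_pos_mul_exp_le_toReal_setLIntegral_Ioi {ρ : ℝ} (hreg : RegularlyVarying ρ U)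
    (hρ : 0 < ρ) {r s : ℝ} (hr : 0 < r) (hs : 0 < s)
    (hfin : ∀ᶠ x in atTop, ∫⁻ y in Ioi x, ENNReal.ofReal (exp (-(r * y))) ∂U.measure < ⊤) :
    ∃ c > 0, ∀ᶠ x in atTop, c * exp (-((r + s) * x)) ≤
      (∫⁻ y in Ioi x, ENNReal.ofReal (exp (-(r * y))) ∂U.measure).toReal := by
  set c := 1 + s / r
  obtain ⟨d, hd, hincr⟩ :=
    hreg.exists_pos_le_apply_mul_sub U.mono hρ (lt_add_of_pos_right 1 (div_pos hs hr))
  refine ⟨d, hd, ?_⟩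
  filter_upwards [hincr, hfin] with x hdx hx
  rw [← ENNReal.ofReal_le_iff_le_toReal hx.ne]
  calc ENNReal.ofReal (d * exp (-((r + s) * x)))
      ≤ ENNReal.ofReal (exp (-(r * (c * x)))) * ENNReal.ofReal (U (c * x) - U x) := by
        rw [← ENNReal.ofReal_mul (exp_pos _).le, show r * (c * x) = (r + s) * x by
          simp only [c]; field_simp, mul_comm]
        exact ENNReal.ofReal_le_ofReal (mul_le_mul_of_nonneg_left hdx (exp_pos _).le)
    _ ≤ _ := U.le_setLIntegral_Ioi (antitone_exp_neg_mul hr.le) x (c * x)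

end StieltjesFunction

theorem setLIntegral_Ioi_exp_le (μ : Measure ℝ) {r s a x : ℝ} (hsr : s ≤ r) (hax : a ≤ x) :
    ∫⁻ y in Ioi x, ENNReal.ofReal (exp (-(r * y))) ∂μ ≤
      ENNReal.ofReal (exp (-((r - s) * x))) * ∫⁻ y in Ioi a, ENNReal.ofReal (exp (-(s * y))) ∂μ :=
  calc ∫⁻ y in Ioi x, ENNReal.ofReal (exp (-(r * y))) ∂μ
      ≤ ∫⁻ y in Ioi x, ENNReal.ofReal (exp (-((r - s) * x))) *
          ENNReal.ofReal (exp (-(s * y))) ∂μ :=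
        setLIntegral_mono' measurableSet_Ioi fun y hy => by
          rw [← ENNReal.ofReal_mul (exp_pos _).le, ← exp_add]
          exact ENNReal.ofReal_le_ofReal (exp_le_exp.2
            (by nlinarith [mul_nonneg (sub_nonneg.2 hsr) (sub_nonneg.2 (le_of_lt hy))]))
    _ = ENNReal.ofReal (exp (-((r - s) * x))) *
          ∫⁻ y in Ioi x, ENNReal.ofReal (exp (-(s * y))) ∂μ :=
        lintegral_const_mul' _ _ ENNReal.ofReal_ne_top
    _ ≤ _ := mul_le_mul_right (lintegral_mono_set (Ioi_subset_Ioi hax)) _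

theorem exists_pos_toReal_setLIntegral_Ioi_exp_le (μ : Measure ℝ) {r s a : ℝ} (hsr : s ≤ r)
    (ha : ∫⁻ y in Ioi a, ENNReal.ofReal (exp (-(s * y))) ∂μ < ⊤) :
    ∃ c > 0, ∀ x, a ≤ x → (∫⁻ y in Ioi x, ENNReal.ofReal (exp (-(r * y))) ∂μ).toReal ≤
      c * exp (-((r - s) * x)) := by
  refine ⟨(∫⁻ y in Ioi a, ENNReal.ofReal (exp (-(s * y))) ∂μ).toReal + 1, by positivity,
    fun x hx => ?_⟩
  have := ENNReal.toReal_mono (ENNReal.mul_ne_top ENNReal.ofReal_ne_top ha.ne)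
    (setLIntegral_Ioi_exp_le μ hsr hx)
  rw [ENNReal.toReal_mul, ENNReal.toReal_ofReal (exp_pos _).le] at this
  nlinarith [exp_pos (-((r - s) * x))]

theorem tendsto_neg_log_div_of_exp_bounds {φ : ℝ → ℝ} {r : ℝ}
    (hlow : ∀ᶠ s in 𝓝[>] 0, ∃ c > 0, ∀ᶠ x in atTop, c * exp (-((r + s) * x)) ≤ φ x)
    (hupp : ∀ᶠ s in 𝓝[>] 0, ∃ c > 0, ∀ᶠ x in atTop, φ x ≤ c * exp (-((r - s) * x))) :
    Tendsto (fun x => -log (φ x) / x) atTop (𝓝 r) := by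
  have hlim : ∀ t c : ℝ, Tendsto (fun x => (t * x - log c) / x) atTop (𝓝 t) := fun t c => by
    have := (tendsto_const_nhds (x := t)).sub
      ((tendsto_const_nhds (x := log c)).div_atTop tendsto_id)
    rw [sub_zero] at this
    refine this.congr' ?_
    filter_upwards [eventually_gt_atTop 0] with x hx
    simp only [id]
    field_simp
  have hsub : Tendsto (fun s => r - s) (𝓝[>] 0) (𝓝 r) :=
    ((continuous_const.sub continuous_id).tendsto' 0 r (sub_zero r)).mono_left nhdsWithin_le_nhds
  have hadd : Tendsto (fun s => r + s) (𝓝[>] 0) (𝓝 r) :=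
    ((continuous_const.add continuous_id).tendsto' 0 r (add_zero r)).mono_left nhdsWithin_le_nhds
  obtain ⟨s₀, c₀, hc₀, hφ₀⟩ := hlow.exists
  have hφpos : ∀ᶠ x in atTop, 0 < φ x := hφ₀.mono fun x hx => lt_of_lt_of_le (by positivity) hx
  refine tendsto_order.2 ⟨fun a ha => ?_, fun b hb => ?_⟩
  · obtain ⟨s, ⟨c, hc, hφ⟩, has⟩ := (hupp.and (hsub.eventually (lt_mem_nhds ha))).exists
    filter_upwards [hφ, hφpos, (hlim (r - s) c).eventually (lt_mem_nhds has), eventually_gt_atTop 0]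
      with x hx hxpos hax hx0
    have hlog : log (φ x) ≤ log c - (r - s) * x := by
      calc log (φ x) ≤ log (c * exp (-((r - s) * x))) := log_le_log hxpos hx
        _ = _ := by rw [log_mul hc.ne' (exp_pos _).ne', log_exp]; ring
    exact hax.trans_le (div_le_div_of_nonneg_right (by linarith) hx0.le)
  · obtain ⟨s, ⟨c, hc, hφ⟩, hbs⟩ := (hlow.and (hadd.eventually (gt_mem_nhds hb))).exists
    filter_upwards [hφ, (hlim (r + s) c).eventually (gt_mem_nhds hbs), eventually_gt_atTop 0]
      with x hx hbx hx0
    have hlog : log c - (r + s) * x ≤ log (φ x) := by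
      calc log c - (r + s) * x = log (c * exp (-((r + s) * x))) := by
            rw [log_mul hc.ne' (exp_pos _).ne', log_exp]; ring
        _ ≤ log (φ x) := log_le_log (by positivity) hx
    exact (div_le_div_of_nonneg_right (by linarith) hx0.le).trans_lt hbx

theorem neg_log_stieltjes_integral_of_regularlyVarying_general
    (U : StieltjesFunction ℝ)
    (ρ : ℝ) (hρ : 0 < ρ) (hreg : RegularlyVarying ρ U) :
    ∀ r : ℝ, 0 < r →
      Tendsto (fun x =>
          -Real.log ((∫⁻ y in Set.Ioi x,
              ENNReal.ofReal (Real.exp (-(r * y))) ∂U.measure).toReal) / (r * x))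
        atTop (nhds 1) := by
  intro r hr
  have hfin : ∀ s > 0, ∀ᶠ a in atTop,
      ∫⁻ y in Ioi a, ENNReal.ofReal (exp (-(s * y))) ∂U.measure < ⊤ := fun s hs =>
    U.eventually_setLIntegral_exp_lt_top hreg.eventually_pos
      (hreg.tendsto_apply_add_div U.mono zero_le_one) hs
  have hlow : ∀ᶠ s in 𝓝[>] 0, ∃ c > 0, ∀ᶠ x in atTop, c * exp (-((r + s) * x)) ≤
      (∫⁻ y in Ioi x, ENNReal.ofReal (exp (-(r * y))) ∂U.measure).toReal := by
    filter_upwards [self_mem_nhdsWithin] with s hs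
    exact U.exists_pos_mul_exp_le_toReal_setLIntegral_Ioi hreg hρ hr hs (hfin r hr)
  have hupp : ∀ᶠ s in 𝓝[>] 0, ∃ c > 0, ∀ᶠ x in atTop,
      (∫⁻ y in Ioi x, ENNReal.ofReal (exp (-(r * y))) ∂U.measure).toReal ≤
        c * exp (-((r - s) * x)) := by
    filter_upwards [Ioo_mem_nhdsGT hr] with s hs
    obtain ⟨a, ha⟩ := (hfin s hs.1).exists
    obtain ⟨c, hc, hle⟩ := exists_pos_toReal_setLIntegral_Ioi_exp_le U.measure hs.2.le ha
    exact ⟨c, hc, (eventually_ge_atTop a).mono hle⟩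
  have := (tendsto_neg_log_div_of_exp_bounds hlow hupp).div_const r
  rw [div_self hr.ne'] at this
  exact this.congr fun x => by rw [div_div, mul_comm]

/-- Let `U` be non-decreasing right-continuous, vanishing on `(-∞,0)`,
and regularly varying of index `ρ > 0` at `∞`. Then for every `r > 0`,
`-log ∫_{(x,∞)} e^{-r y} dU(y) ~ r x` as `x → ∞`. -/
theorem neg_log_stieltjes_integral_of_regularlyVarying
    (U : StieltjesFunction ℝ) (hU0 : ∀ x < 0, U x = 0)
    (ρ : ℝ) (hρ : 0 < ρ) (hreg : RegularlyVarying ρ U) :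
    ∀ r : ℝ, 0 < r →
      Tendsto (fun x =>
          -Real.log ((∫⁻ y in Set.Ioi x,
              ENNReal.ofReal (Real.exp (-(r * y))) ∂U.measure).toReal) / (r * x))
        atTop (nhds 1) :=
  neg_log_stieltjes_integral_of_regularlyVarying_general U ρ hρ hreg
end

section
/- Let F be the distribution function of risk-neutral log-returns with ∫ e^x dF(x) = 1, and let V(k) denote the implied volatility at log-strike k. If −log F(−k)/k → q* as k → ∞ for some q* ∈ (0,∞), then V(−k)²/k → ψ(q*) as k → ∞. -/
open Filter MeasureTheory Real Set

/-- The standard normal distribution function `Φ`. -/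
noncomputable def Phi (x : ℝ) : ℝ :=
  ∫ t in Set.Iic x, Real.exp (-(t ^ 2) / 2) / Real.sqrt (2 * Real.pi)

/-- The normalized Black–Scholes call price `c_BS(k, σ) = Φ(d₁) - e^k Φ(d₂)`,
`d₁ = -k/σ + σ/2`, `d₂ = -k/σ - σ/2`. -/
noncomputable def cBS (k σ : ℝ) : ℝ :=
  Phi (-k / σ + σ / 2) - Real.exp k * Phi (-k / σ - σ / 2)

/-- `ψ(x) = 2 - 4(√(x² + x) - x)`. -/
noncomputable def psi (x : ℝ) : ℝ := 2 - 4 * (Real.sqrt (x ^ 2 + x) - x)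

/-! The out-of-the-money put `P(k) = ∫_{x ≤ -k} (e⁻ᵏ - eˣ) dF(x)` lies between
`e⁻ᵏ (1 - e⁻¹) F(-k-1)` and `e⁻ᵏ F(-k)`, so `-log P(k) / k → 1 + q*`. By put–call parity `V(-k)`
is also the implied volatility of this put. With `X = k/σ - σ/2` and `Y = k/σ + σ/2`, so that
`Y² = X² + 2k` and `e⁻ᵏ φ(X) = φ(Y)`, Mills' ratio bounds `x/(1+x²) φ(x) ≤ Φ(-x) ≤ φ(x)/x` show
that the Black–Scholes put `e⁻ᵏ Φ(-X) - Φ(-Y)` is `e^{-k - X²/2}` up to a factor polynomial in `k`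
once `X ≥ 1`. Hence `X² / (2k) → q*`, and `ψ(X² / (2k)) = σ² / k`. -/

open Topology

noncomputable def phi (x : ℝ) : ℝ := Real.exp (-(x ^ 2) / 2) / Real.sqrt (2 * Real.pi)

lemma Phi_eq_setIntegral_phi (x : ℝ) : Phi x = ∫ t in Iic x, phi t := rfl

lemma phi_eq_gaussianPDFReal : phi = ProbabilityTheory.gaussianPDFReal 0 1 := by
  ext x
  simp [phi, ProbabilityTheory.gaussianPDFReal, div_eq_inv_mul]

lemma phi_pos (x : ℝ) : 0 < phi x := by
  unfold phi
  positivity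

lemma phi_neg (x : ℝ) : phi (-x) = phi x := by
  simp [phi]

lemma integrable_phi : Integrable phi :=
  phi_eq_gaussianPDFReal ▸ ProbabilityTheory.integrable_gaussianPDFReal 0 1

lemma integral_phi : ∫ x, phi x = 1 := by
  rw [phi_eq_gaussianPDFReal]
  exact ProbabilityTheory.integral_gaussianPDFReal_eq_one 0 one_ne_zero

lemma hasDerivAt_phi (x : ℝ) : HasDerivAt phi (-x * phi x) x := by
  have h := (((hasDerivAt_pow 2 x).neg.div_const 2).exp).div_const (Real.sqrt (2 * Real.pi))
  refine h.congr_deriv ?_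
  simp only [phi, Pi.neg_apply]
  ring

lemma tendsto_phi_atTop : Tendsto phi atTop (𝓝 0) := by
  have h : Tendsto (fun x : ℝ => -(x ^ 2) / 2) atTop atBot :=
    (tendsto_neg_atTop_atBot.comp (tendsto_pow_atTop two_ne_zero)).atBot_div_const two_pos
  exact zero_div (Real.sqrt (2 * Real.pi)) ▸ (tendsto_exp_atBot.comp h).div_const _

lemma one_le_sqrt_two_pi : 1 ≤ Real.sqrt (2 * Real.pi) :=
  Real.one_le_sqrt.2 (by linarith [Real.pi_gt_three])

lemma sqrt_two_pi_le_three : Real.sqrt (2 * Real.pi) ≤ 3 :=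
  Real.sqrt_le_iff.2 ⟨by norm_num, by linarith [Real.pi_lt_four]⟩

lemma phi_le_exp (x : ℝ) : phi x ≤ Real.exp (-(x ^ 2) / 2) :=
  div_le_self (Real.exp_pos _).le one_le_sqrt_two_pi

lemma exp_div_three_le_phi (x : ℝ) : Real.exp (-(x ^ 2) / 2) / 3 ≤ phi x :=
  div_le_div_of_nonneg_left (Real.exp_pos _).le (by positivity) sqrt_two_pi_le_three

lemma Phi_neg_eq_setIntegral_Ioi (x : ℝ) : Phi (-x) = ∫ t in Ioi x, phi t := by
  rw [Phi_eq_setIntegral_phi, ← integral_comp_neg_Ioi]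
  simp only [phi_neg]

lemma Phi_neg (x : ℝ) : Phi (-x) = 1 - Phi x := by
  rw [Phi_neg_eq_setIntegral_Ioi, Phi_eq_setIntegral_phi, ← integral_phi,
    ← intervalIntegral.integral_Iic_add_Ioi integrable_phi.integrableOn integrable_phi.integrableOn]
  ring

lemma Phi_nonneg (x : ℝ) : 0 ≤ Phi x :=
  setIntegral_nonneg measurableSet_Iic fun t _ => (phi_pos t).le

lemma Phi_mono : Monotone Phi := fun _ _ hab =>
  setIntegral_mono_set integrable_phi.integrableOn (ae_of_all _ fun t => (phi_pos t).le)
    (Iic_subset_Iic.2 hab).eventuallyLE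

lemma Phi_neg_le_phi_div {x : ℝ} (hx : 0 < x) : Phi (-x) ≤ phi x / x := by
  have hint : IntegrableOn (fun t => t * phi t) (Ioi x) := by
    refine ((integrable_mul_exp_neg_mul_sq one_half_pos).div_const
      (Real.sqrt (2 * Real.pi))).integrableOn.congr_fun (fun t _ => ?_) measurableSet_Ioi
    simp only [phi]
    ring_nf
  have hmoment : ∫ t in Ioi x, t * phi t = phi x := by
    have h := integral_Ioi_of_hasDerivAt_of_tendsto' (f := fun t => -phi t)
      (fun t _ => (hasDerivAt_phi t).neg) (by simpa using hint) tendsto_phi_atTop.neg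
    simpa using h
  rw [le_div_iff₀ hx, Phi_neg_eq_setIntegral_Ioi, ← hmoment, ← integral_mul_const]
  refine setIntegral_mono_on (integrable_phi.integrableOn.mul_const x) hint measurableSet_Ioi
    fun t ht => ?_
  rw [mul_comm]
  exact mul_le_mul_of_nonneg_right (le_of_lt ht) (phi_pos t).le

lemma mul_phi_le_Phi_neg (x : ℝ) : x / (1 + x ^ 2) * phi x ≤ Phi (-x) := by
  set r : ℝ → ℝ := fun t => (t ^ 4 + 2 * t ^ 2 - 1) / (1 + t ^ 2) ^ 2 with hr_def
  have hr : ∀ t, |r t| ≤ 1 := fun t => by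
    rw [abs_div, abs_of_pos (by positivity : (0 : ℝ) < (1 + t ^ 2) ^ 2),
      div_le_one (by positivity), abs_le]
    constructor <;> nlinarith [sq_nonneg t, sq_nonneg (t ^ 2)]
  have hderiv : ∀ t, HasDerivAt (fun t => -(t / (1 + t ^ 2) * phi t)) (r t * phi t) t := by
    intro t
    have hden : (1 : ℝ) + t ^ 2 ≠ 0 := by positivity
    have h := (((hasDerivAt_id t).div ((hasDerivAt_pow 2 t).const_add 1) hden).mul
      (hasDerivAt_phi t)).neg
    refine h.congr_deriv ?_
    simp only [hr_def, id, Pi.div_apply]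
    field_simp
    ring
  have hint : Integrable (fun t => r t * phi t) := by
    refine integrable_phi.mono' (by simp only [hr_def, phi]; fun_prop) (ae_of_all _ fun t => ?_)
    rw [norm_mul, Real.norm_eq_abs, Real.norm_of_nonneg (phi_pos t).le]
    exact mul_le_of_le_one_left (phi_pos t).le (hr t)
  have hlim : Tendsto (fun t => -(t / (1 + t ^ 2) * phi t)) atTop (𝓝 0) := by
    refine squeeze_zero_norm (fun t => ?_) tendsto_phi_atTop
    rw [norm_neg, norm_mul, Real.norm_eq_abs, Real.norm_of_nonneg (phi_pos t).le, abs_div,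
      abs_of_pos (by positivity : (0 : ℝ) < 1 + t ^ 2)]
    refine mul_le_of_le_one_left (phi_pos t).le ((div_le_one (by positivity)).2 ?_)
    nlinarith [abs_nonneg t, sq_abs t, sq_nonneg (|t| - 1)]
  have hprimitive : ∫ t in Ioi x, r t * phi t = x / (1 + x ^ 2) * phi x := by
    rw [integral_Ioi_of_hasDerivAt_of_tendsto' (fun t _ => hderiv t) hint.integrableOn hlim]
    ring
  rw [← hprimitive, Phi_neg_eq_setIntegral_Ioi]
  exact setIntegral_mono_on hint.integrableOn integrable_phi.integrableOn measurableSet_Ioi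
    fun t _ => mul_le_of_le_one_left (phi_pos t).le ((le_abs_self _).trans (hr t))

lemma Phi_neg_one_pos : 0 < Phi (-1) := by
  have h := mul_phi_le_Phi_neg 1
  have := phi_pos 1
  norm_num at h
  linarith

/-- The put `e^k Φ(-d₂) - Φ(-d₁)`, with `d₁, d₂` as in `cBS`. -/
noncomputable def pBS (k σ : ℝ) : ℝ :=
  Real.exp k * Phi (k / σ + σ / 2) - Phi (k / σ - σ / 2)

lemma cBS_sub_pBS (k σ : ℝ) : cBS k σ - pBS k σ = 1 - Real.exp k := by
  rw [cBS, pBS, show -k / σ + σ / 2 = -(k / σ - σ / 2) by ring,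
    show -k / σ - σ / 2 = -(k / σ + σ / 2) by ring, Phi_neg, Phi_neg]
  ring

lemma pBS_neg (k σ : ℝ) :
    pBS (-k) σ = Real.exp (-k) * Phi (-(k / σ - σ / 2)) - Phi (-(k / σ + σ / 2)) := by
  rw [pBS]
  ring_nf

lemma exp_neg_mul_phi {σ : ℝ} (k : ℝ) (hσ : σ ≠ 0) :
    Real.exp (-k) * phi (k / σ - σ / 2) = phi (k / σ + σ / 2) := by
  rw [phi, phi, ← mul_div_assoc, ← Real.exp_add]
  congr 2
  field_simp
  ring

lemma pBS_neg_le {k σ : ℝ} (hX : 1 ≤ k / σ - σ / 2) :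
    pBS (-k) σ ≤ Real.exp (-k) * Real.exp (-((k / σ - σ / 2) ^ 2) / 2) := by
  set X := k / σ - σ / 2
  have hPhi : Phi (-X) ≤ Real.exp (-(X ^ 2) / 2) :=
    calc Phi (-X) ≤ phi X / X := Phi_neg_le_phi_div (by linarith)
      _ ≤ phi X := div_le_self (phi_pos X).le hX
      _ ≤ Real.exp (-(X ^ 2) / 2) := phi_le_exp X
  rw [pBS_neg]
  nlinarith [Phi_nonneg (-(k / σ + σ / 2)), Real.exp_pos (-k)]

lemma exp_neg_mul_le_pBS_neg_of_le_one {k σ : ℝ} (hk : 0 < k) (hσ : 0 < σ)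
    (hX : k / σ - σ / 2 ≤ 1) :
    Real.exp (-k) * (Phi (-1) - (Real.sqrt (2 * k))⁻¹) ≤ pBS (-k) σ := by
  set X := k / σ - σ / 2
  set Y := k / σ + σ / 2
  have hY : 0 < Y := by positivity
  have hsqrt : Real.sqrt (2 * k) ≤ Y := Real.sqrt_le_iff.2 ⟨hY.le, by
    nlinarith [sq_nonneg X, show Y ^ 2 = X ^ 2 + 2 * k by simp only [X, Y]; field_simp; ring]⟩
  have hPhiY : Phi (-Y) ≤ Real.exp (-k) * (Real.sqrt (2 * k))⁻¹ :=
    calc Phi (-Y) ≤ phi Y / Y := Phi_neg_le_phi_div hY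
      _ = Real.exp (-k) * phi X / Y := by rw [exp_neg_mul_phi k hσ.ne']
      _ ≤ Real.exp (-k) * 1 / Y := by
        gcongr
        exact (phi_le_exp X).trans (Real.exp_le_one_iff.2 (by nlinarith [sq_nonneg X]))
      _ ≤ Real.exp (-k) * (Real.sqrt (2 * k))⁻¹ := by
        rw [mul_one, ← div_eq_mul_inv]
        gcongr
  have hPhiX : Phi (-1) ≤ Phi (-X) := Phi_mono (neg_le_neg hX)
  rw [pBS_neg]
  nlinarith [Real.exp_pos (-k)]

lemma exp_neg_mul_le_pBS_neg {k σ : ℝ} (hk : 4 ≤ k) (hσ : 0 < σ) (hX : 1 ≤ k / σ - σ / 2) :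
    Real.exp (-k) * (Real.exp (-((k / σ - σ / 2) ^ 2) / 2) /
      (3 * (1 + (k / σ - σ / 2) ^ 2) * (k / σ - σ / 2 + k))) ≤ pBS (-k) σ := by
  set X := k / σ - σ / 2
  set Y := k / σ + σ / 2
  have hYX : Y = X + σ := by ring
  have hXσ : X * σ = k - σ ^ 2 / 2 := by simp only [X]; field_simp
  have hXσ_two : 2 ≤ X * σ := by
    rcases le_total 2 σ with h | h <;> nlinarith
  have hY_le : Y ≤ X + k := by nlinarith
  have hY : 0 < Y := by linarith
  have hphi : Real.exp (-k) * phi X = phi Y := exp_neg_mul_phi k hσ.ne'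
  have hP : pBS (-k) σ = Real.exp (-k) * Phi (-X) - Phi (-Y) := pBS_neg k σ
  clear_value X Y
  have hgap : 1 / ((1 + X ^ 2) * (X + k)) ≤ X / (1 + X ^ 2) - 1 / Y := by
    have hgap_eq : X / (1 + X ^ 2) - 1 / Y = (X * σ - 1) / ((1 + X ^ 2) * Y) := by
      rw [hYX]
      field_simp
      ring
    rw [hgap_eq]
    calc 1 / ((1 + X ^ 2) * (X + k)) ≤ 1 / ((1 + X ^ 2) * Y) := by gcongr
      _ ≤ (X * σ - 1) / ((1 + X ^ 2) * Y) := by gcongr; linarith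
  calc Real.exp (-k) * (Real.exp (-(X ^ 2) / 2) / (3 * (1 + X ^ 2) * (X + k)))
      = Real.exp (-(Y ^ 2) / 2) / 3 * (1 / ((1 + X ^ 2) * (X + k))) := by
        rw [show -(Y ^ 2) / 2 = -k + -(X ^ 2) / 2 by
          rw [hYX]; linear_combination (-1 : ℝ) * hXσ, Real.exp_add]
        field_simp
    _ ≤ phi Y * (X / (1 + X ^ 2) - 1 / Y) :=
        mul_le_mul (exp_div_three_le_phi Y) hgap (by positivity) (phi_pos Y).le
    _ = Real.exp (-k) * (X / (1 + X ^ 2) * phi X) - phi Y / Y := by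
        rw [← hphi]
        ring
    _ ≤ pBS (-k) σ := by
        rw [hP]
        gcongr
        · exact mul_phi_le_Phi_neg X
        · exact Phi_neg_le_phi_div hY

lemma psi_sq_div {k σ : ℝ} (hk : 0 < k) (hσ : 0 < σ) (hX : 0 ≤ k / σ - σ / 2) :
    psi ((k / σ - σ / 2) ^ 2 / (2 * k)) = σ ^ 2 / k := by
  have hσk : σ ^ 2 / k ≤ 2 := by
    rw [div_le_iff₀ hk]
    nlinarith [mul_nonneg hX hσ.le, show (k / σ - σ / 2) * σ = k - σ ^ 2 / 2 by field_simp]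
  set u := (k / σ - σ / 2) ^ 2 / (2 * k)
  have hu : 0 ≤ u := by positivity
  have hsqrt : Real.sqrt (u ^ 2 + u) = (2 + 4 * u - σ ^ 2 / k) / 4 := by
    rw [Real.sqrt_eq_iff_eq_sq (by positivity) (by linarith)]
    simp only [u]
    field_simp
    ring
  rw [psi, hsqrt]
  ring

lemma continuous_psi : Continuous psi := by
  unfold psi
  fun_prop

lemma neg_log_exp_neg_mul_div {k c : ℝ} (hk : k ≠ 0) (hc : 0 < c) :
    -Real.log (Real.exp (-k) * c) / k = 1 + -Real.log c / k := by
  rw [Real.log_mul (Real.exp_pos _).ne' hc.ne', Real.log_exp]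
  field_simp
  ring

lemma neg_log_div_le_neg_log_div {a b k : ℝ} (ha : 0 < a) (hk : 0 ≤ k) (hab : a ≤ b) :
    -Real.log b / k ≤ -Real.log a / k := by
  gcongr

lemma one_add_sq_div_le_neg_log_pBS_neg_div {k σ : ℝ} (hk : 4 ≤ k) (hσ : 0 < σ)
    (hX : 1 ≤ k / σ - σ / 2) :
    1 + (k / σ - σ / 2) ^ 2 / (2 * k) ≤ -Real.log (pBS (-k) σ) / k := by
  have hpos : 0 < pBS (-k) σ := lt_of_lt_of_le (by positivity) (exp_neg_mul_le_pBS_neg hk hσ hX)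
  have h := neg_log_div_le_neg_log_div (k := k) hpos (by linarith) (pBS_neg_le hX)
  rw [neg_log_exp_neg_mul_div (by linarith) (Real.exp_pos _), Real.log_exp] at h
  exact le_of_eq_of_le (by ring) h

lemma neg_log_pBS_neg_div_le {k σ : ℝ} (hk : 4 ≤ k) (hσ : 0 < σ) (hX : 1 ≤ k / σ - σ / 2) :
    -Real.log (pBS (-k) σ) / k ≤ 1 + (k / σ - σ / 2) ^ 2 / (2 * k) +
      Real.log (3 * (1 + (k / σ - σ / 2) ^ 2) * (k / σ - σ / 2 + k)) / k := by
  have hden : 0 < 3 * (1 + (k / σ - σ / 2) ^ 2) * (k / σ - σ / 2 + k) := by positivity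
  have h := neg_log_div_le_neg_log_div (k := k) (by positivity) (by linarith)
    (exp_neg_mul_le_pBS_neg hk hσ hX)
  rw [neg_log_exp_neg_mul_div (by linarith) (by positivity), Real.log_div (Real.exp_pos _).ne'
    hden.ne', Real.log_exp] at h
  exact h.trans_eq (by ring)

lemma log_three_mul_one_add_sq_mul_add_le {X k A : ℝ} (hk : 1 ≤ k) (hA : 0 ≤ A) (hX : 0 ≤ X)
    (hXA : X ^ 2 ≤ A * k) :
    Real.log (3 * (1 + X ^ 2) * (X + k)) ≤ Real.log (3 * (1 + A) * (2 + A)) + 2 * Real.log k := by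
  have h1 : 1 + X ^ 2 ≤ (1 + A) * k := by nlinarith
  have h2 : X + k ≤ (2 + A) * k := by nlinarith
  rw [show 2 * Real.log k = Real.log (k ^ 2) by rw [Real.log_pow]; norm_num,
    ← Real.log_mul (by positivity) (by positivity)]
  refine Real.log_le_log (by positivity) ?_
  calc 3 * (1 + X ^ 2) * (X + k) ≤ 3 * ((1 + A) * k) * ((2 + A) * k) := by gcongr
    _ = 3 * (1 + A) * (2 + A) * k ^ 2 := by ring

lemma tendsto_const_add_two_mul_log_div (C : ℝ) :
    Tendsto (fun k => (C + 2 * Real.log k) / k) atTop (𝓝 0) := by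
  have h := (tendsto_const_nhds (x := C)).div_atTop tendsto_id |>.add
    (Real.isLittleO_log_id_atTop.tendsto_div_nhds_zero.const_mul 2)
  simp only [mul_zero, add_zero] at h
  refine h.congr fun k => ?_
  simp only [id]
  ring

section ImpliedVolatility

variable {σ : ℝ → ℝ} {q : ℝ}

lemma eventually_one_le_of_tendsto_neg_log_pBS (hq : 0 < q) (hσ : ∀ k, 0 < σ k)
    (hL : Tendsto (fun k => -Real.log (pBS (-k) (σ k)) / k) atTop (𝓝 (1 + q))) :
    ∀ᶠ k in atTop, 1 ≤ k / σ k - σ k / 2 := by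
  -- Otherwise the put price is at least `c e⁻ᵏ`, which would force the limit `1`.
  set c := Phi (-1) / 2 with hc_def
  have hc : 0 < c := half_pos Phi_neg_one_pos
  have hsqrt : Tendsto (fun k : ℝ => (Real.sqrt (2 * k))⁻¹) atTop (𝓝 0) :=
    tendsto_inv_atTop_zero.comp (Real.tendsto_sqrt_atTop.comp (tendsto_id.const_mul_atTop two_pos))
  have hlog : Tendsto (fun k => -Real.log c / k) atTop (𝓝 0) :=
    tendsto_const_nhds.div_atTop tendsto_id
  filter_upwards [hL.eventually (eventually_gt_nhds (by linarith : 1 + q / 2 < 1 + q)),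
    hsqrt.eventually (eventually_lt_nhds hc), hlog.eventually (eventually_lt_nhds (half_pos hq)),
    eventually_gt_atTop 0] with k hLk hsqrt_k hlog_k hk
  by_contra! hX
  have hP : Real.exp (-k) * c ≤ pBS (-k) (σ k) :=
    (mul_le_mul_of_nonneg_left (by linarith [hc_def]) (Real.exp_pos _).le).trans
      (exp_neg_mul_le_pBS_neg_of_le_one hk (hσ k) hX.le)
  have h := neg_log_div_le_neg_log_div (mul_pos (Real.exp_pos _) hc) hk.le hP
  rw [neg_log_exp_neg_mul_div hk.ne' hc] at h
  linarith

lemma tendsto_sq_div_of_tendsto_neg_log_pBS (hq : 0 < q) (hσ : ∀ k, 0 < σ k)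
    (hL : Tendsto (fun k => -Real.log (pBS (-k) (σ k)) / k) atTop (𝓝 (1 + q))) :
    Tendsto (fun k => σ k ^ 2 / k) atTop (𝓝 (psi q)) := by
  set X : ℝ → ℝ := fun k => k / σ k - σ k / 2
  set L : ℝ → ℝ := fun k => -Real.log (pBS (-k) (σ k)) / k
  have hX : ∀ᶠ k in atTop, 1 ≤ X k := eventually_one_le_of_tendsto_neg_log_pBS hq hσ hL
  have hL_lt : ∀ᶠ k in atTop, L k < 1 + (q + 1) := hL.eventually (eventually_lt_nhds (by linarith))
  set C := Real.log (3 * (1 + 2 * (q + 1)) * (2 + 2 * (q + 1)))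
  have hu : Tendsto (fun k => X k ^ 2 / (2 * k)) atTop (𝓝 q) := by
    refine tendsto_of_tendsto_of_tendsto_of_le_of_le'
      (g := fun k => L k - 1 - (C + 2 * Real.log k) / k) (h := fun k => L k - 1) ?_ ?_ ?_ ?_
    · simpa using (hL.sub_const 1).sub (tendsto_const_add_two_mul_log_div C)
    · simpa using hL.sub_const 1
    · filter_upwards [hX, hL_lt, eventually_ge_atTop 4] with k hXk hLk hk
      have hlower : 1 + X k ^ 2 / (2 * k) ≤ L k :=
        one_add_sq_div_le_neg_log_pBS_neg_div hk (hσ k) hXk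
      have hupper :
          L k ≤ 1 + X k ^ 2 / (2 * k) + Real.log (3 * (1 + X k ^ 2) * (X k + k)) / k :=
        neg_log_pBS_neg_div_le hk (hσ k) hXk
      have hXA : X k ^ 2 ≤ 2 * (q + 1) * k := by
        have := (div_le_iff₀ (by linarith : (0 : ℝ) < 2 * k)).1
          (show X k ^ 2 / (2 * k) ≤ q + 1 by linarith)
        linarith
      have herr : Real.log (3 * (1 + X k ^ 2) * (X k + k)) / k ≤ (C + 2 * Real.log k) / k := by
        gcongr
        exact log_three_mul_one_add_sq_mul_add_le (by linarith) (by linarith) (by linarith) hXA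
      linarith
    · filter_upwards [hX, eventually_ge_atTop 4] with k hXk hk
      have hlower : 1 + X k ^ 2 / (2 * k) ≤ L k :=
        one_add_sq_div_le_neg_log_pBS_neg_div hk (hσ k) hXk
      linarith
  refine (continuous_psi.tendsto q |>.comp hu).congr' ?_
  filter_upwards [hX, eventually_gt_atTop 0] with k hXk hk
  exact psi_sq_div hk (hσ k) (zero_le_one.trans hXk)

end ImpliedVolatility

lemma tendsto_comp_add_one_div {f : ℝ → ℝ} {q : ℝ}
    (h : Tendsto (fun k => f k / k) atTop (𝓝 q)) :
    Tendsto (fun k => f (k + 1) / k) atTop (𝓝 q) := by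
  have hratio : Tendsto (fun k : ℝ => (k + 1) / k) atTop (𝓝 1) := by
    refine (tendsto_const_nhds.add tendsto_inv_atTop_zero).congr' ?_ |>.trans (by rw [add_zero])
    filter_upwards [eventually_gt_atTop 0] with k hk
    field_simp
  have h' := (h.comp (tendsto_atTop_add_const_right _ 1 tendsto_id)).mul hratio
  rw [mul_one] at h'
  refine h'.congr' ?_
  filter_upwards [eventually_gt_atTop 0] with k hk
  simp only [Function.comp, id]
  field_simp

section PutPrice

variable {μ : Measure ℝ} [IsFiniteMeasure μ]

lemma integrableOn_exp_sub_Iic (a : ℝ) :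
    IntegrableOn (fun x => Real.exp a - Real.exp x) (Iic a) μ := by
  refine (integrable_const (Real.exp a)).mono' (by fun_prop) ?_
  filter_upwards [ae_restrict_mem measurableSet_Iic] with x hx
  rw [Real.norm_of_nonneg (sub_nonneg.2 (Real.exp_le_exp.2 hx))]
  linarith [Real.exp_pos x]

lemma setIntegral_Iic_exp_sub_le (a : ℝ) :
    ∫ x in Iic a, (Real.exp a - Real.exp x) ∂μ ≤ Real.exp a * μ.real (Iic a) := by
  calc ∫ x in Iic a, (Real.exp a - Real.exp x) ∂μ ≤ ∫ _ in Iic a, Real.exp a ∂μ :=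
        setIntegral_mono_on (integrableOn_exp_sub_Iic a) (integrableOn_const) measurableSet_Iic
          fun x _ => by linarith [Real.exp_pos x]
    _ = Real.exp a * μ.real (Iic a) := by rw [setIntegral_const, smul_eq_mul, mul_comm]

lemma mul_le_setIntegral_Iic_exp_sub {a b : ℝ} (hba : b ≤ a) :
    (Real.exp a - Real.exp b) * μ.real (Iic b) ≤ ∫ x in Iic a, (Real.exp a - Real.exp x) ∂μ := by
  calc (Real.exp a - Real.exp b) * μ.real (Iic b)
        = ∫ _ in Iic b, (Real.exp a - Real.exp b) ∂μ := by
        rw [setIntegral_const, smul_eq_mul, mul_comm]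
    _ ≤ ∫ x in Iic b, (Real.exp a - Real.exp x) ∂μ :=
        setIntegral_mono_on integrableOn_const ((integrableOn_exp_sub_Iic a).mono_set
          (Iic_subset_Iic.2 hba)) measurableSet_Iic
          fun x hx => by linarith [Real.exp_le_exp.2 (mem_Iic.1 hx)]
    _ ≤ ∫ x in Iic a, (Real.exp a - Real.exp x) ∂μ :=
        setIntegral_mono_set (integrableOn_exp_sub_Iic a)
          (ae_restrict_of_forall_mem measurableSet_Iic fun x hx =>
            sub_nonneg.2 (Real.exp_le_exp.2 hx))
          (Iic_subset_Iic.2 hba).eventuallyLE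

lemma tendsto_neg_log_setIntegral_Iic_exp_sub {q : ℝ} (hq : 0 < q)
    (htail : Tendsto (fun k => -Real.log (μ.real (Iic (-k))) / k) atTop (𝓝 q)) :
    Tendsto (fun k => -Real.log (∫ x in Iic (-k), (Real.exp (-k) - Real.exp x) ∂μ) / k) atTop
      (𝓝 (1 + q)) := by
  have hG : ∀ᶠ k in atTop, 0 < μ.real (Iic (-k)) := by
    filter_upwards [htail.eventually (eventually_ne_nhds hq.ne')] with k hk
    refine measureReal_nonneg.lt_of_ne fun h => hk ?_
    rw [← h, Real.log_zero, neg_zero, zero_div]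
  set c := 1 - Real.exp (-1)
  have hc : 0 < c := sub_pos.2 (Real.exp_lt_one_iff.2 (by norm_num))
  have hshift : Tendsto (fun k : ℝ => k + 1) atTop atTop :=
    tendsto_atTop_add_const_right _ 1 tendsto_id
  have hupper_lim : Tendsto
      (fun k => 1 + -Real.log c / k + -Real.log (μ.real (Iic (-(k + 1)))) / k) atTop
      (𝓝 (1 + q)) := by
    simpa using (tendsto_const_nhds.add (tendsto_const_nhds.div_atTop tendsto_id)).add
      (tendsto_comp_add_one_div htail)
  have hbounds : ∀ᶠ k in atTop,
      1 + -Real.log (μ.real (Iic (-k))) / k ≤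
        -Real.log (∫ x in Iic (-k), (Real.exp (-k) - Real.exp x) ∂μ) / k ∧
      -Real.log (∫ x in Iic (-k), (Real.exp (-k) - Real.exp x) ∂μ) / k ≤
        1 + -Real.log c / k + -Real.log (μ.real (Iic (-(k + 1)))) / k := by
    filter_upwards [hG, hshift.eventually hG, eventually_gt_atTop 0] with k hGk hGk1 hk
    have hP_ge : Real.exp (-k) * (c * μ.real (Iic (-(k + 1)))) ≤
        ∫ x in Iic (-k), (Real.exp (-k) - Real.exp x) ∂μ := by
      refine le_of_eq_of_le ?_
        (mul_le_setIntegral_Iic_exp_sub (μ := μ) (show -(k + 1) ≤ -k by linarith))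
      rw [show -(k + 1) = -k + -1 by ring, Real.exp_add]
      ring
    constructor
    · have h := neg_log_div_le_neg_log_div (k := k) (lt_of_lt_of_le (by positivity) hP_ge) hk.le
        (setIntegral_Iic_exp_sub_le (μ := μ) (-k))
      rwa [neg_log_exp_neg_mul_div hk.ne' hGk] at h
    · have h := neg_log_div_le_neg_log_div (by positivity) hk.le hP_ge
      rw [neg_log_exp_neg_mul_div hk.ne' (by positivity), Real.log_mul hc.ne' hGk1.ne'] at h
      exact h.trans_eq (by ring)
  exact tendsto_of_tendsto_of_tendsto_of_le_of_le' (tendsto_const_nhds.add htail) hupper_lim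
    (hbounds.mono fun _ h => h.1) (hbounds.mono fun _ h => h.2)

end PutPrice

lemma setIntegral_Ioi_exp_sub_eq {μ : Measure ℝ} [IsProbabilityMeasure μ]
    (hint : Integrable (fun x => Real.exp x) μ) (hmart : ∫ x, Real.exp x ∂μ = 1) (a : ℝ) :
    ∫ x in Ioi a, (Real.exp x - Real.exp a) ∂μ =
      1 - Real.exp a + ∫ x in Iic a, (Real.exp a - Real.exp x) ∂μ := by
  have hf : Integrable (fun x => Real.exp x - Real.exp a) μ := hint.sub (integrable_const _)
  have hsplit := intervalIntegral.integral_Iic_add_Ioi (b := a) hf.integrableOn hf.integrableOn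
  have htotal : ∫ x, (Real.exp x - Real.exp a) ∂μ = 1 - Real.exp a := by
    rw [integral_sub hint (integrable_const _), hmart, integral_const, probReal_univ, one_smul]
  have hIic : ∫ x in Iic a, (Real.exp a - Real.exp x) ∂μ =
      -∫ x in Iic a, (Real.exp x - Real.exp a) ∂μ := by
    rw [← integral_neg]
    simp only [neg_sub]
  linarith

lemma tendsto_zero_of_tendsto_neg_log_div {f : ℝ → ℝ} {q : ℝ} (hq : 0 < q)
    (h : Tendsto (fun k => -Real.log (f k) / k) atTop (𝓝 q)) : Tendsto f atTop (𝓝 0) := by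
  have hlog : Tendsto (fun k => Real.log (f k)) atTop atBot := by
    refine tendsto_neg_atTop_iff.1 ((tendsto_id.atTop_mul_pos hq h).congr' ?_)
    filter_upwards [eventually_ne_atTop 0] with k hk
    rw [id, mul_div_cancel₀ _ hk]
  refine squeeze_zero_norm (fun k => ?_) (Real.tendsto_exp_atBot.comp hlog)
  rcases eq_or_ne (f k) 0 with hk | hk
  · simp [hk]
  · rw [Function.comp_apply, Real.exp_log_eq_abs hk, Real.norm_eq_abs]

/-- **tail-wing formula, left wing.** If `F` is the distribution
function of risk-neutral log-returns with `∫ eˣ dF(x) = 1`, `V(k)` the implied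
volatility, and `-log F(-k)/k → q*` with `q* ∈ (0,∞)`, then
`V(-k)²/k → ψ(q*)` as `k → ∞`. -/
theorem tail_wing_left
    (F : StieltjesFunction ℝ) (hprob : IsProbabilityMeasure F.measure)
    (hint : Integrable (fun x => Real.exp x) F.measure)
    (hmart : ∫ x, Real.exp x ∂F.measure = 1)
    (V : ℝ → ℝ)
    (hV : ∀ k, 0 < V k ∧
      cBS k (V k) = ∫ x in Set.Ioi k, (Real.exp x - Real.exp k) ∂F.measure)
    (qstar : ℝ) (hq : 0 < qstar)
    (htail : Tendsto (fun k => -Real.log (F (-k)) / k) atTop (nhds qstar)) :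
    Tendsto (fun k => (V (-k)) ^ 2 / k) atTop (nhds (psi qstar)) := by
  have hF_bot : Tendsto F atBot (𝓝 0) := by
    simpa [Function.comp_def] using
      (tendsto_zero_of_tendsto_neg_log_div hq htail).comp tendsto_neg_atBot_atTop
  have hF : ∀ x, F.measure.real (Iic x) = F x := fun x => by
    rw [measureReal_def, F.measure_Iic hF_bot, sub_zero,
      ENNReal.toReal_ofReal (F.mono.le_of_tendsto hF_bot x)]
  have hput : ∀ k,
      pBS (-k) (V (-k)) = ∫ x in Iic (-k), (Real.exp (-k) - Real.exp x) ∂F.measure := by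
    intro k
    have h := cBS_sub_pBS (-k) (V (-k))
    rw [(hV (-k)).2, setIntegral_Ioi_exp_sub_eq hint hmart] at h
    linarith
  have hL := tendsto_neg_log_setIntegral_Iic_exp_sub (μ := F.measure) hq
    (by simpa only [hF] using htail)
  exact tendsto_sq_div_of_tendsto_neg_log_pBS hq (fun k => (hV (-k)).1)
    (by simpa only [hput] using hL)
end

section
/- Let σ ≥ 0, μ ∈ ℝ, λ > 0, η₁, η₂ > 0, p, q > 0 with p + q = 1, and let X be a real random variable with log E[e^{sX}] = σ²s²/2 + μs + λ(pη₁/(η₁−s) + qη₂/(η₂+s) − 1) for all s ∈ (−η₂, η₁) and E[e^{sX}] = ∞ for s ≥ η₁ and s ≤ −η₂ (double exponential / Kou model). Then log P(X > x) ~ −η₁ x and log P(X ≤ −x) ~ −η₂ x as x → ∞. -/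
/-!
Suppose the cumulant generating function of `Y` is `C / (r - s) + O(1)` on `[0, r)`; for the
double exponential model this holds for `X` with `r = η₁`, `C = λ p η₁`, and for `-X` with
`r = η₂`, `C = λ q η₂`. Chernoff's bound at `s` close to `r` gives
`log P(Y > x) ≤ -(r - ε) x + O(1)`. For the lower bound, tilt at `s = r - √(C / x) / u` with
`1 < u < v`: the mgf there is about `exp (u √(C x))`, while tilting at `1` and at `v` instead shows
that `{Y ≤ x}` and `{Y > v² x}` contribute only `exp (γ √(C x))` with `γ < u`. So the range
`x < Y ≤ v² x` carries the mass, which forces `P(Y > x) ≥ exp (-r v² x)`.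
-/

open Filter MeasureTheory ProbabilityTheory Real Set Topology

lemma exp_add_exp_add_one_le_exp {a b c : ℝ} (ha₀ : 0 ≤ a) (ha : a + 2 ≤ c) (hb : b + 2 ≤ c) :
    exp a + exp b + 1 ≤ exp c := by
  have h₁ : 1 ≤ exp a := one_le_exp ha₀
  have h₂ : exp a ≤ exp (c - 2) := exp_le_exp.2 (by linarith)
  have h₃ : exp b ≤ exp (c - 2) := exp_le_exp.2 (by linarith)
  calc exp a + exp b + 1 ≤ 3 * exp (c - 2) := by linarith
    _ ≤ exp 2 * exp (c - 2) := by gcongr; linarith [add_one_le_exp 2]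
    _ = exp c := by rw [← exp_add]; ring_nf

lemma tendsto_log_div_of_exp_bounds {f : ℝ → ℝ} {r : ℝ} (hr : 0 < r)
    (hlow : ∀ w > 1, ∀ᶠ x in atTop, exp (-(r * w * x)) ≤ f x)
    (hup : ∀ s ∈ Ico 0 r, ∃ c, ∀ᶠ x in atTop, f x ≤ exp (c - s * x)) :
    Tendsto (fun x => log (f x) / x) atTop (𝓝 (-r)) := by
  have hpos : ∀ᶠ x in atTop, 0 < f x :=
    (hlow 2 one_lt_two).mono fun x hx => (exp_pos _).trans_le hx
  refine tendsto_order.2 ⟨fun a ha => ?_, fun b hb => ?_⟩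
  · set w := (1 - a / r) / 2
    have hw : 1 < w := by
      have : a / r < -1 := by rwa [div_lt_iff₀ hr, neg_one_mul]
      simp only [w]
      linarith
    have hrw : a < -(r * w) := by
      simp only [w]
      field_simp
      linarith
    filter_upwards [hlow w hw, hpos, eventually_gt_atTop 0] with x hfx hfx₀ hx
    rw [lt_div_iff₀ hx]
    calc a * x < -(r * w) * x := mul_lt_mul_of_pos_right hrw hx
      _ ≤ log (f x) := by rw [le_log_iff_exp_le hfx₀]; simpa only [neg_mul] using hfx
  · set s := max 0 ((r - b) / 2)
    have hs : s ∈ Ico 0 r := ⟨le_max_left _ _, max_lt hr (by linarith)⟩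
    have hbs : 0 < b + s := by linarith [le_max_right 0 ((r - b) / 2)]
    obtain ⟨c, hc⟩ := hup s hs
    have hcx : Tendsto (fun x => c / x) atTop (𝓝 0) := tendsto_const_nhds.div_atTop tendsto_id
    filter_upwards [hc, hpos, eventually_gt_atTop 0, hcx.eventually (gt_mem_nhds hbs)]
      with x hfx hfx₀ hx hcx
    rw [div_lt_iff₀ hx] at hcx ⊢
    calc log (f x) ≤ c - s * x := (log_le_iff_le_exp hfx₀).2 hfx
      _ < b * x := by linarith

lemma tendsto_div_neg_mul_of_tendsto_div {l : Filter ℝ} {g : ℝ → ℝ} {r : ℝ} (hr : r ≠ 0)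
    (h : Tendsto (fun x => g x / x) l (𝓝 (-r))) :
    Tendsto (fun x => g x / (-(r * x))) l (𝓝 1) := by
  have := h.div_const (-r)
  rw [div_self (neg_ne_zero.2 hr)] at this
  exact this.congr fun x => by rw [div_div, mul_neg, mul_comm]

section Tails

variable {Ω : Type*} [MeasurableSpace Ω] {μ : Measure Ω} {Y : Ω → ℝ}

lemma mgf_le_of_split [IsFiniteMeasure μ] (hY : Measurable Y) {s₀ s s₁ : ℝ} (hs₀ : s₀ ≤ s)
    (hs₁ : s ≤ s₁) (hs : 0 ≤ s) (hi₀ : Integrable (fun ω => exp (s₀ * Y ω)) μ)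
    (hi₁ : Integrable (fun ω => exp (s₁ * Y ω)) μ) (x y : ℝ) :
    mgf Y μ s ≤ exp ((s - s₀) * x) * mgf Y μ s₀ + μ.real {ω | x < Y ω} * exp (s * y) +
      exp (-((s₁ - s) * y)) * mgf Y μ s₁ := by
  set A := {ω | x < Y ω}
  have hA : MeasurableSet A := measurableSet_lt measurable_const hY
  have hiA : Integrable (A.indicator fun _ => exp (s * y)) μ := (integrable_const _).indicator hA
  have hbound : ∀ ω, exp (s * Y ω) ≤ exp ((s - s₀) * x) * exp (s₀ * Y ω) +
      A.indicator (fun _ => exp (s * y)) ω + exp (-((s₁ - s) * y)) * exp (s₁ * Y ω) := by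
    intro ω
    have hAω : 0 ≤ A.indicator (fun _ => exp (s * y)) ω :=
      Set.indicator_nonneg (fun _ _ => (exp_pos _).le) ω
    simp only [← exp_add]
    rcases le_or_gt (Y ω) x with hx | hx
    · have : exp (s * Y ω) ≤ exp ((s - s₀) * x + s₀ * Y ω) := exp_le_exp.2 (by nlinarith)
      linarith [exp_pos (-((s₁ - s) * y) + s₁ * Y ω)]
    rcases le_or_gt (Y ω) y with hy | hy
    · rw [Set.indicator_of_mem (show ω ∈ A from hx)]
      have : exp (s * Y ω) ≤ exp (s * y) := exp_le_exp.2 (mul_le_mul_of_nonneg_left hy hs)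
      linarith [exp_pos ((s - s₀) * x + s₀ * Y ω), exp_pos (-((s₁ - s) * y) + s₁ * Y ω)]
    · have : exp (s * Y ω) ≤ exp (-((s₁ - s) * y) + s₁ * Y ω) := exp_le_exp.2 (by nlinarith)
      linarith [exp_pos ((s - s₀) * x + s₀ * Y ω)]
  calc mgf Y μ s
      ≤ ∫ ω, (exp ((s - s₀) * x) * exp (s₀ * Y ω) + A.indicator (fun _ => exp (s * y)) ω +
          exp (-((s₁ - s) * y)) * exp (s₁ * Y ω)) ∂μ :=
        integral_mono_of_nonneg (ae_of_all _ fun ω => (exp_pos _).le)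
          (((hi₀.const_mul _).add hiA).add (hi₁.const_mul _)) (ae_of_all _ hbound)
    _ = _ := by
      rw [integral_add (by exact (hi₀.const_mul _).add hiA) (hi₁.const_mul _),
        integral_add (hi₀.const_mul _) hiA, integral_const_mul, integral_const_mul,
        integral_indicator_const _ hA, smul_eq_mul, mgf, mgf]

lemma exp_sub_le_mgf_and_mgf_le_exp_add [NeZero μ] {s a K : ℝ}
    (hi : Integrable (fun ω => exp (s * Y ω)) μ) (h : |cgf Y μ s - a| ≤ K) :
    exp (a - K) ≤ mgf Y μ s ∧ mgf Y μ s ≤ exp (a + K) := by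
  rw [← exp_cgf hi]
  obtain ⟨h₁, h₂⟩ := abs_le.1 h
  exact ⟨exp_le_exp.2 (by linarith), exp_le_exp.2 (by linarith)⟩

variable (μ Y) in
def CgfPoleBound (r C K : ℝ) : Prop :=
  ∀ s ∈ Ico 0 r, Integrable (fun ω => exp (s * Y ω)) μ ∧ |cgf Y μ s - C / (r - s)| ≤ K

variable [IsProbabilityMeasure μ] {r C K : ℝ}

lemma measureReal_ge_le_exp_of_cgfPoleBound (h : CgfPoleBound μ Y r C K) {s : ℝ}
    (hs : s ∈ Ico 0 r) (x : ℝ) :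
    μ.real {ω | x ≤ Y ω} ≤ exp (C / (r - s) + K - s * x) :=
  calc μ.real {ω | x ≤ Y ω} ≤ exp (-s * x) * mgf Y μ s :=
        measure_ge_le_exp_mul_mgf x hs.1 (h s hs).1
    _ ≤ exp (-s * x) * exp (C / (r - s) + K) := by
        gcongr; exact (exp_sub_le_mgf_and_mgf_le_exp_add (h s hs).1 (h s hs).2).2
    _ = exp (C / (r - s) + K - s * x) := by rw [← exp_add]; ring_nf

/-- With `G = √(C x)`, the tilt `s = r - G / (a x)` has `C / (r - s) = a G`. The mgf at the tilt
`u` is split over `Y ≤ x`, `x < Y ≤ v² x`, `Y > v² x`; the outer parts are bounded through the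
tilts `1` and `v`. -/
lemma exp_le_mgf_tilts (hY : Measurable Y) (h : CgfPoleBound μ Y r C K) {x G u v : ℝ}
    (hx : 0 < x) (hG : 0 < G) (hGx : G ^ 2 = C * x) (hGr : G ≤ r * x) (hu : 1 < u) (huv : u < v) :
    exp (u * G - K) ≤ exp ((2 - 1 / u) * G + K) + μ.real {ω | x < Y ω} * exp (r * v ^ 2 * x) +
      exp ((2 * v - v ^ 2 / u) * G + K) := by
  have hu₀ : u ≠ 0 := by positivity
  have hv₀ : v ≠ 0 := by linarith
  set tilt : ℝ → ℝ := fun a => r - G / (a * x)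
  have tilt_mem : ∀ a ≥ 1, tilt a ∈ Ico 0 r := fun a ha => by
    have h₁ : G / (a * x) ≤ G / x := div_le_div_of_nonneg_left hG.le hx (by nlinarith)
    have h₂ : G / x ≤ r := (div_le_iff₀ hx).2 hGr
    have h₃ : 0 < G / (a * x) := by positivity
    exact ⟨by simp only [tilt]; linarith, by simp only [tilt]; linarith⟩
  have pole : ∀ a > 0, C / (r - tilt a) = a * G := fun a ha => by
    simp only [tilt, sub_sub_cancel]
    field_simp
    linear_combination -hGx
  have bounds : ∀ a ≥ 1, exp (a * G - K) ≤ mgf Y μ (tilt a) ∧ mgf Y μ (tilt a) ≤ exp (a * G + K) :=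
    fun a ha => by
      rw [← pole a (by linarith)]
      exact exp_sub_le_mgf_and_mgf_le_exp_add (h _ (tilt_mem a ha)).1 (h _ (tilt_mem a ha)).2
  have hmono : ∀ a b, 0 < a → a ≤ b → tilt a ≤ tilt b := fun a b ha hab => by
    simp only [tilt]
    gcongr
  have hsplit := mgf_le_of_split hY (hmono 1 u one_pos hu.le) (hmono u v (by linarith) huv.le)
    (tilt_mem u hu.le).1 (h _ (tilt_mem 1 le_rfl)).1 (h _ (tilt_mem v (by linarith))).1
    x (v ^ 2 * x)
  have below : exp ((tilt u - tilt 1) * x) * mgf Y μ (tilt 1) ≤ exp ((2 - 1 / u) * G + K) :=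
    calc _ ≤ exp ((tilt u - tilt 1) * x) * exp (1 * G + K) := by
          gcongr; exact (bounds 1 le_rfl).2
      _ = _ := by
          rw [← exp_add]; congr 1; simp only [tilt]; field_simp; ring
  have middle : μ.real {ω | x < Y ω} * exp (tilt u * (v ^ 2 * x)) ≤
      μ.real {ω | x < Y ω} * exp (r * v ^ 2 * x) := by
    refine mul_le_mul_of_nonneg_left (exp_le_exp.2 ?_) measureReal_nonneg
    rw [← mul_assoc]
    exact mul_le_mul_of_nonneg_right (mul_le_mul_of_nonneg_right (tilt_mem u hu.le).2.le
      (sq_nonneg v)) hx.le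
  have above : exp (-((tilt v - tilt u) * (v ^ 2 * x))) * mgf Y μ (tilt v) ≤
      exp ((2 * v - v ^ 2 / u) * G + K) :=
    calc _ ≤ exp (-((tilt v - tilt u) * (v ^ 2 * x))) * exp (v * G + K) := by
          gcongr; exact (bounds v (by linarith)).2
      _ = _ := by
          rw [← exp_add]; congr 1; simp only [tilt]; field_simp; ring
  linarith [(bounds u hu.le).1]

lemma eventually_exp_le_measureReal_gt (hY : Measurable Y) (hr : 0 < r) (hC : 0 < C)
    (h : CgfPoleBound μ Y r C K) {w : ℝ} (hw : 1 < w) :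
    ∀ᶠ x in atTop, exp (-(r * w * x)) ≤ μ.real {ω | x < Y ω} := by
  set v := √w
  set u := (1 + v) / 2
  have hv : 1 < v := by rw [lt_sqrt zero_le_one]; linarith
  have hu : 1 < u := by simp only [u]; linarith
  have huv : u < v := by simp only [u]; linarith
  have hK : 0 ≤ K := (abs_nonneg _).trans (h 0 ⟨le_rfl, hr⟩).2
  have hγ₁ : 0 ≤ 2 - 1 / u := by
    have : 1 / u < 1 := (div_lt_one (by linarith)).2 hu
    linarith
  have hgap₁ : 0 < u - (2 - 1 / u) := by
    rw [show u - (2 - 1 / u) = (u - 1) ^ 2 / u by field_simp; ring]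
    exact div_pos (pow_pos (by linarith) 2) (by linarith)
  have hgap₂ : 0 < u - (2 * v - v ^ 2 / u) := by
    rw [show u - (2 * v - v ^ 2 / u) = (v - u) ^ 2 / u by field_simp; ring]
    exact div_pos (pow_pos (by linarith) 2) (by linarith)
  have hG : Tendsto (fun x => √(C * x)) atTop atTop :=
    tendsto_sqrt_atTop.comp (tendsto_id.const_mul_atTop hC)
  filter_upwards [eventually_gt_atTop 0, eventually_ge_atTop (C / r ^ 2),
    hG.eventually_ge_atTop ((2 * K + 2) / (u - (2 - 1 / u))),
    hG.eventually_ge_atTop ((2 * K + 2) / (u - (2 * v - v ^ 2 / u)))] with x hx hxr hG₁ hG₂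
  set G := √(C * x)
  have hGpos : 0 < G := sqrt_pos.2 (by positivity)
  have hGx : G ^ 2 = C * x := sq_sqrt (by positivity)
  have hGr : G ≤ r * x := by
    rw [div_le_iff₀ (by positivity)] at hxr
    exact sqrt_le_iff.2 ⟨by positivity, by nlinarith⟩
  rw [div_le_iff₀ hgap₁] at hG₁
  rw [div_le_iff₀ hgap₂] at hG₂
  have hsum := exp_add_exp_add_one_le_exp (a := (2 - 1 / u) * G + K)
    (b := (2 * v - v ^ 2 / u) * G + K) (c := u * G - K)
    (add_nonneg (mul_nonneg hγ₁ hGpos.le) hK) (by linarith) (by linarith)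
  have key := exp_le_mgf_tilts hY h hx hGpos hGx hGr hu huv
  rw [sq_sqrt (by linarith)] at key hsum
  have hone : 1 ≤ μ.real {ω | x < Y ω} * exp (r * w * x) := by linarith
  calc exp (-(r * w * x)) ≤ exp (-(r * w * x)) * (μ.real {ω | x < Y ω} * exp (r * w * x)) :=
        le_mul_of_one_le_right (exp_pos _).le hone
    _ = μ.real {ω | x < Y ω} := by
        rw [mul_left_comm, ← exp_add, neg_add_cancel, exp_zero, mul_one]

theorem tendsto_log_measureReal_div_of_cgfPoleBound (hY : Measurable Y) (hr : 0 < r)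
    (hC : 0 < C) (h : CgfPoleBound μ Y r C K) :
    Tendsto (fun x => log (μ.real {ω | x < Y ω}) / x) atTop (𝓝 (-r)) ∧
      Tendsto (fun x => log (μ.real {ω | x ≤ Y ω}) / x) atTop (𝓝 (-r)) := by
  have hsub : ∀ x, μ.real {ω | x < Y ω} ≤ μ.real {ω | x ≤ Y ω} :=
    fun x => measureReal_mono fun ω (hω : x < Y ω) => hω.le
  have hlow := fun w (hw : 1 < w) => eventually_exp_le_measureReal_gt hY hr hC h hw
  have hup : ∀ s ∈ Ico 0 r, ∃ c, ∀ᶠ x in atTop, μ.real {ω | x ≤ Y ω} ≤ exp (c - s * x) :=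
    fun s hs => ⟨_, Eventually.of_forall (measureReal_ge_le_exp_of_cgfPoleBound h hs)⟩
  refine ⟨tendsto_log_div_of_exp_bounds hr hlow fun s hs => ?_,
    tendsto_log_div_of_exp_bounds hr (fun w hw => ?_) hup⟩
  · obtain ⟨c, hc⟩ := hup s hs
    exact ⟨c, hc.mono fun x hx => (hsub x).trans hx⟩
  · exact (hlow w hw).mono fun x hx => hx.trans (hsub x)

end Tails

noncomputable def doubleExponentialCgf (σ μ₀ lam η₁ η₂ p q s : ℝ) : ℝ :=
  σ ^ 2 * s ^ 2 / 2 + μ₀ * s + lam * (p * η₁ / (η₁ - s) + q * η₂ / (η₂ + s) - 1)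

lemma doubleExponentialCgf_neg (σ μ₀ lam η₁ η₂ p q s : ℝ) :
    doubleExponentialCgf σ μ₀ lam η₁ η₂ p q (-s) =
      doubleExponentialCgf σ (-μ₀) lam η₂ η₁ q p s := by
  simp only [doubleExponentialCgf]
  ring

section DoubleExponential

variable {Ω : Type*} [MeasurableSpace Ω] {μ : Measure Ω} {X : Ω → ℝ}
  {σ μ₀ lam η₁ η₂ p q : ℝ}

variable (μ X) in
def HasDoubleExponentialCgf (σ μ₀ lam η₁ η₂ p q : ℝ) : Prop :=
  ∀ s ∈ Ioo (-η₂) η₁, Integrable (fun ω => exp (s * X ω)) μ ∧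
    cgf X μ s = doubleExponentialCgf σ μ₀ lam η₁ η₂ p q s

lemma HasDoubleExponentialCgf.neg (h : HasDoubleExponentialCgf μ X σ μ₀ lam η₁ η₂ p q) :
    HasDoubleExponentialCgf μ (-X) σ (-μ₀) lam η₂ η₁ q p := fun s hs => by
  obtain ⟨hi, he⟩ := h (-s) ⟨neg_lt_neg hs.2, neg_lt.1 hs.1⟩
  refine ⟨?_, by rw [cgf_neg, he, doubleExponentialCgf_neg]⟩
  simpa only [Pi.neg_apply, mul_neg, neg_mul] using hi

/-- Near `η₁` only the upward jumps blow up; the rest of the cgf is continuous on `[0, η₁]`. -/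
lemma HasDoubleExponentialCgf.cgfPoleBound (h : HasDoubleExponentialCgf μ X σ μ₀ lam η₁ η₂ p q)
    (hη₂ : 0 < η₂) : ∃ K, CgfPoleBound μ X η₁ (lam * p * η₁) K := by
  set g : ℝ → ℝ := fun s => σ ^ 2 * s ^ 2 / 2 + μ₀ * s + lam * (q * η₂ / (η₂ + s) - 1)
  have hg : ContinuousOn g (Icc 0 η₁) := by
    fun_prop (disch := exact fun s hs => by linarith [hs.1])
  obtain ⟨K, hK⟩ := isCompact_Icc.exists_bound_of_continuousOn hg
  refine ⟨K, fun s hs => ⟨(h s ⟨by linarith [hs.1], hs.2⟩).1, ?_⟩⟩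
  have hrest : doubleExponentialCgf σ μ₀ lam η₁ η₂ p q s - lam * p * η₁ / (η₁ - s) = g s := by
    simp only [doubleExponentialCgf, g]
    ring
  rw [(h s ⟨by linarith [hs.1], hs.2⟩).2, hrest, ← norm_eq_abs]
  exact hK s (Ico_subset_Icc_self hs)

end DoubleExponential

theorem doubleExponential_tails_general
    {Ω : Type*} [MeasurableSpace Ω] (μ : Measure Ω) [IsProbabilityMeasure μ]
    (X : Ω → ℝ) (hX : Measurable X)
    (σ μ₀ lam η₁ η₂ p q : ℝ)
    (hlam : 0 < lam) (hη₁ : 0 < η₁) (hη₂ : 0 < η₂)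
    (hp : 0 < p) (hq : 0 < q)
    (hmgf : ∀ s ∈ Set.Ioo (-η₂) η₁,
      Integrable (fun ω => Real.exp (s * X ω)) μ ∧
      Real.log (∫ ω, Real.exp (s * X ω) ∂μ) =
        σ ^ 2 * s ^ 2 / 2 + μ₀ * s +
          lam * (p * η₁ / (η₁ - s) + q * η₂ / (η₂ + s) - 1)) :
    Tendsto (fun x => Real.log ((μ {ω | x < X ω}).toReal) / (-(η₁ * x)))
      atTop (nhds 1) ∧
    Tendsto (fun x => Real.log ((μ {ω | X ω ≤ -x}).toReal) / (-(η₂ * x)))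
      atTop (nhds 1) := by
  have hDE : HasDoubleExponentialCgf μ X σ μ₀ lam η₁ η₂ p q := hmgf
  obtain ⟨K₁, h₁⟩ := hDE.cgfPoleBound hη₂
  obtain ⟨K₂, h₂⟩ := hDE.neg.cgfPoleBound hη₁
  have right := (tendsto_log_measureReal_div_of_cgfPoleBound hX hη₁ (by positivity) h₁).1
  have left := (tendsto_log_measureReal_div_of_cgfPoleBound hX.neg hη₂ (by positivity) h₂).2
  refine ⟨tendsto_div_neg_mul_of_tendsto_div hη₁.ne' right, ?_⟩
  simpa only [Pi.neg_apply, le_neg, measureReal_def] using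
    tendsto_div_neg_mul_of_tendsto_div hη₂.ne' left

/-- **double exponential / Kou model.** If `X` has mgf `M` with
`log M(s) = σ²s²/2 + μ₀ s + λ(pη₁/(η₁-s) + qη₂/(η₂+s) - 1)` on `(-η₂, η₁)`, infinite
for `s ≥ η₁` and `s ≤ -η₂`, then `log P(X > x) ~ -η₁ x` and `log P(X ≤ -x) ~ -η₂ x`
as `x → ∞`. -/
theorem doubleExponential_tails
    {Ω : Type*} [MeasurableSpace Ω] (μ : Measure Ω) [IsProbabilityMeasure μ]
    (X : Ω → ℝ) (hX : Measurable X)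
    (σ μ₀ lam η₁ η₂ p q : ℝ)
    (hσ : 0 ≤ σ) (hlam : 0 < lam) (hη₁ : 0 < η₁) (hη₂ : 0 < η₂)
    (hp : 0 < p) (hq : 0 < q) (hpq : p + q = 1)
    (hmgf : ∀ s ∈ Set.Ioo (-η₂) η₁,
      Integrable (fun ω => Real.exp (s * X ω)) μ ∧
      Real.log (∫ ω, Real.exp (s * X ω) ∂μ) =
        σ ^ 2 * s ^ 2 / 2 + μ₀ * s +
          lam * (p * η₁ / (η₁ - s) + q * η₂ / (η₂ + s) - 1))
    (hinf : ∀ s : ℝ, η₁ ≤ s ∨ s ≤ -η₂ →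
      ¬ Integrable (fun ω => Real.exp (s * X ω)) μ) :
    Tendsto (fun x => Real.log ((μ {ω | x < X ω}).toReal) / (-(η₁ * x)))
      atTop (nhds 1) ∧
    Tendsto (fun x => Real.log ((μ {ω | X ω ≤ -x}).toReal) / (-(η₂ * x)))
      atTop (nhds 1) :=
  doubleExponential_tails_general μ X hX σ μ₀ lam η₁ η₂ p q hlam hη₁ hη₂ hp hq hmgf
end
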